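/- arXiv:1007.0284 — 8 statements merged into one kernel-verified Lean document; each statement's English description precedes it below -/
import Mathlib

section
/- Let (Y, δ) be a Borel pseudo-metric space, Y_0 ⊆ Y_1 ⊆ Y_2 ⊆ ⋯ a sequence of Borel subsets of Y, let (X_n, d_n), n ∈ ℕ, be a sequence of Borel pseudo-metric spaces, and let p, q ∈ [1, +∞). Suppose there are constants A, C, D > 0, a point y* ∈ ∏_{n∈ℕ} Y_n, a sequence of Borel maps T_n : X_n → ℓ_q((Y_n)_{n∈ℕ}, y*), and sequences of non-negative reals (ε_n), (η_n) such that: (1) ∑_n ε_n^p < +∞ and ∑_n η_n^q < +∞; (2) for u, v ∈ X_n, d_n(u,v) < ε_n implies δ_q(T_n(u), T_n(v)) < η_n; (3) d_n(u,v) ≥ C implies δ_q(T_n(u), T_n(v)) ≥ D; (4) ε_n ≤ d_n(u,v) < C implies A^{-1} d_n(u,v)^{p/q} ≤ δ_q(T_n(u), T_n(v)) ≤ A d_n(u,v)^{p/q}. Then E((X_n)_{n∈ℕ}; p) is Borel reducible to E((Y_n)_{n∈ℕ}; q). -/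
/-- A pseudo-metric on a set `X`. -/
structure IsPseudometric {X : Type*} (d : X → X → ℝ) : Prop where
  nonneg : ∀ x y, 0 ≤ d x y
  refl : ∀ x, d x x = 0
  symm : ∀ x y, d x y = d y x
  triangle : ∀ x y z, d x z ≤ d x y + d y z

/-- `E` is Borel reducible to `F` (w.r.t. the Borel σ-algebras of the topologies). -/
def BorelReducible {α β : Type*} [TopologicalSpace α] [TopologicalSpace β]
    (E : α → α → Prop) (F : β → β → Prop) : Prop :=
  ∃ θ : α → β, @Measurable α β (borel α) (borel β) θ ∧ ∀ x y, E x y ↔ F (θ x) (θ y)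

private lemma rpow_helper {x q : ℝ} (hx : 0 ≤ x) (hq : 0 < q) : (x ^ (1/q)) ^ q = x := by
  rw [← Real.rpow_mul hx, one_div_mul_cancel hq.ne', Real.rpow_one]

private lemma add_rpow_le {s t q : ℝ} (hs : 0 ≤ s) (ht : 0 ≤ t) (hq : 0 ≤ q) :
    (s + t) ^ q ≤ 2 ^ q * (s ^ q + t ^ q) := by
  calc (s + t) ^ q ≤ (2 * max s t) ^ q := by
        apply Real.rpow_le_rpow (by positivity) ?_ hq
        rcases le_total s t with h | h
        · simp [max_eq_right h]; linarith
        · simp [max_eq_left h]; linarith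
    _ = 2 ^ q * (max s t) ^ q := Real.mul_rpow (by norm_num) (le_max_of_le_left hs)
    _ ≤ 2 ^ q * (s ^ q + t ^ q) := by
        apply mul_le_mul_of_nonneg_left ?_ (by positivity)
        rcases le_total s t with h | h
        · rw [max_eq_right h]; nlinarith [Real.rpow_nonneg hs q]
        · rw [max_eq_left h]; nlinarith [Real.rpow_nonneg ht q]

set_option maxHeartbeats 1000000 in
theorem stmt0
    {Y : Type*} [TopologicalSpace Y] [PolishSpace Y]
    (δ : Y → Y → ℝ) (hδ : IsPseudometric δ)
    (hδBorel : @Measurable (Y × Y) ℝ (borel (Y × Y)) (borel ℝ) fun pr => δ pr.1 pr.2)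
    (Yset : ℕ → Set Y)
    (hYBorel : ∀ n, @MeasurableSet Y (borel Y) (Yset n))
    (hYmono : ∀ n, Yset n ⊆ Yset (n + 1))
    {X : ℕ → Type*} [∀ n, TopologicalSpace (X n)] [∀ n, PolishSpace (X n)]
    (d : ∀ n, X n → X n → ℝ) (hd : ∀ n, IsPseudometric (d n))
    (hdBorel : ∀ n,
      @Measurable (X n × X n) ℝ (borel (X n × X n)) (borel ℝ) fun pr => d n pr.1 pr.2)
    (p q : ℝ) (hp : 1 ≤ p) (hq : 1 ≤ q)
    (A C D : ℝ) (hA : 0 < A) (hC : 0 < C) (hD : 0 < D)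
    (ystar : ℕ → Y) (hystar : ∀ n, ystar n ∈ Yset n)
    (T : ∀ n, X n → ℕ → Y)
    (hTmem : ∀ n u m, T n u m ∈ Yset m)
    (hTlq : ∀ n u, Summable fun m => δ (T n u m) (ystar m) ^ q)
    (hTBorel : ∀ n, @Measurable (X n) (ℕ → Y) (borel (X n)) (borel (ℕ → Y)) (T n))
    (ε η : ℕ → ℝ) (hε : ∀ n, 0 ≤ ε n) (hη : ∀ n, 0 ≤ η n)
    (h1 : Summable fun n => ε n ^ p) (h1' : Summable fun n => η n ^ q)
    (h2 : ∀ n u v, d n u v < ε n →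
      (∑' m, δ (T n u m) (T n v m) ^ q) ^ (1 / q) < η n)
    (h3 : ∀ n u v, C ≤ d n u v →
      D ≤ (∑' m, δ (T n u m) (T n v m) ^ q) ^ (1 / q))
    (h4 : ∀ n u v, ε n ≤ d n u v → d n u v < C →
      A⁻¹ * d n u v ^ (p / q) ≤ (∑' m, δ (T n u m) (T n v m) ^ q) ^ (1 / q) ∧
      (∑' m, δ (T n u m) (T n v m) ^ q) ^ (1 / q) ≤ A * d n u v ^ (p / q)) :
    BorelReducible
      (fun x y : ∀ n, X n => Summable fun n => d n (x n) (y n) ^ p)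
      (fun x y : ∀ n, Yset n => Summable fun n => δ (x n : Y) (y n : Y) ^ q) := by
  have hq0 : (0:ℝ) < q := lt_of_lt_of_le one_pos hq
  have hp0 : (0:ℝ) < p := lt_of_lt_of_le one_pos hp
  -- monotonicity of Yset
  have hmono : ∀ {m k : ℕ}, m ≤ k → Yset m ⊆ Yset k := by
    intro m k hmk
    induction k with
    | zero => rw [Nat.le_zero.mp hmk]
    | succ k ih =>
      rcases Nat.lt_or_ge m (k+1) with h | h
      · exact (ih (Nat.lt_succ_iff.mp h)).trans (hYmono k)
      · rw [le_antisymm hmk h]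
  -- the reduction map
  let θ : (∀ n, X n) → ∀ k, Yset k := fun x k =>
    ⟨T (Nat.unpair k).1 (x (Nat.unpair k).1) (Nat.unpair k).2,
      hmono (Nat.unpair_right_le k) (hTmem _ _ _)⟩
  -- inner summability
  have hinner : ∀ n u v, Summable fun m => δ (T n u m) (T n v m) ^ q := by
    intro n u v
    apply Summable.of_nonneg_of_le
      (fun m => Real.rpow_nonneg (hδ.nonneg _ _) q)
      (fun m => ?_) (((hTlq n u).add (hTlq n v)).mul_left (2 ^ q))
    calc δ (T n u m) (T n v m) ^ q
        ≤ (δ (T n u m) (ystar m) + δ (T n v m) (ystar m)) ^ q := by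
          apply Real.rpow_le_rpow (hδ.nonneg _ _) ?_ hq0.le
          calc δ (T n u m) (T n v m) ≤ δ (T n u m) (ystar m) + δ (ystar m) (T n v m) :=
                hδ.triangle _ _ _
            _ = δ (T n u m) (ystar m) + δ (T n v m) (ystar m) := by rw [hδ.symm (ystar m)]
      _ ≤ 2 ^ q * (δ (T n u m) (ystar m) ^ q + δ (T n v m) (ystar m) ^ q) :=
          add_rpow_le (hδ.nonneg _ _) (hδ.nonneg _ _) hq0.le
  set S : ∀ n, X n → X n → ℝ := fun n u v => ∑' m, δ (T n u m) (T n v m) ^ q with hS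
  have hSnonneg : ∀ n u v, 0 ≤ S n u v := fun n u v =>
    tsum_nonneg fun m => Real.rpow_nonneg (hδ.nonneg _ _) q
  have hSpow : ∀ n u v, (S n u v ^ (1/q)) ^ q = S n u v := fun n u v =>
    rpow_helper (hSnonneg n u v) hq0
  -- key analytic lemma
  have key : ∀ u v : ∀ n, X n,
      (Summable fun n => d n (u n) (v n) ^ p) ↔ Summable fun n => S n (u n) (v n) := by
    intro u v
    have hd0 : ∀ n, 0 ≤ d n (u n) (v n) := fun n => (hd n).nonneg _ _
    constructor
    · intro h
      have hev : ∀ᶠ n in Filter.atTop,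
          S n (u n) (v n) ≤ η n ^ q + A ^ q * d n (u n) (v n) ^ p := by
        filter_upwards [h.tendsto_atTop_zero.eventually_lt_const
          (by positivity : (0:ℝ) < C ^ p)] with n hn
        have hdC : d n (u n) (v n) < C := by
          by_contra hcon
          exact absurd (Real.rpow_le_rpow hC.le (not_lt.mp hcon) hp0.le) (not_le.mpr hn)
        by_cases hlt : d n (u n) (v n) < ε n
        · have := h2 n (u n) (v n) hlt
          have h' : (S n (u n) (v n) ^ (1/q)) ^ q ≤ η n ^ q :=
            Real.rpow_le_rpow (Real.rpow_nonneg (hSnonneg _ _ _) _) this.le hq0.le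
          rw [hSpow] at h'
          nlinarith [Real.rpow_nonneg (hd0 n) p, Real.rpow_nonneg hA.le q, h',
            mul_nonneg (Real.rpow_nonneg hA.le q) (Real.rpow_nonneg (hd0 n) p)]
        · have h4' := (h4 n (u n) (v n) (not_lt.mp hlt) hdC).2
          have h' : (S n (u n) (v n) ^ (1/q)) ^ q ≤ (A * d n (u n) (v n) ^ (p/q)) ^ q :=
            Real.rpow_le_rpow (Real.rpow_nonneg (hSnonneg _ _ _) _) h4' hq0.le
          rw [hSpow, Real.mul_rpow hA.le (Real.rpow_nonneg (hd0 n) _),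
            ← Real.rpow_mul (hd0 n), div_mul_cancel₀ p hq0.ne'] at h'
          nlinarith [Real.rpow_nonneg (hη n) q, h']
      obtain ⟨N, hN⟩ := Filter.eventually_atTop.mp hev
      rw [← summable_nat_add_iff N]
      refine Summable.of_nonneg_of_le (fun n => hSnonneg _ _ _)
        (fun n => hN (n + N) (Nat.le_add_left N n)) ?_
      exact (summable_nat_add_iff N).mpr (h1'.add (h.mul_left (A ^ q)))
    · intro h
      have hev : ∀ᶠ n in Filter.atTop,
          d n (u n) (v n) ^ p ≤ ε n ^ p + A ^ q * S n (u n) (v n) := by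
        filter_upwards [h.tendsto_atTop_zero.eventually_lt_const
          (by positivity : (0:ℝ) < D ^ q)] with n hn
        have hdC : d n (u n) (v n) < C := by
          by_contra hcon
          have h3' := h3 n (u n) (v n) (not_lt.mp hcon)
          have h' : D ^ q ≤ (S n (u n) (v n) ^ (1/q)) ^ q :=
            Real.rpow_le_rpow hD.le h3' hq0.le
          rw [hSpow] at h'
          exact absurd h' (not_le.mpr hn)
        by_cases hlt : d n (u n) (v n) < ε n
        · have h' : d n (u n) (v n) ^ p ≤ ε n ^ p :=
            Real.rpow_le_rpow (hd0 n) hlt.le hp0.le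
          nlinarith [mul_nonneg (Real.rpow_nonneg hA.le q) (hSnonneg n (u n) (v n)), h']
        · have h4' := (h4 n (u n) (v n) (not_lt.mp hlt) hdC).1
          have h'' : d n (u n) (v n) ^ (p/q) ≤ A * S n (u n) (v n) ^ (1/q) := by
            rw [inv_mul_le_iff₀ hA] at h4'
            exact h4'
          have h' : (d n (u n) (v n) ^ (p/q)) ^ q ≤ (A * S n (u n) (v n) ^ (1/q)) ^ q :=
            Real.rpow_le_rpow (Real.rpow_nonneg (hd0 n) _) h'' hq0.le
          rw [Real.mul_rpow hA.le (Real.rpow_nonneg (hSnonneg _ _ _) _), hSpow,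
            ← Real.rpow_mul (hd0 n), div_mul_cancel₀ p hq0.ne'] at h'
          nlinarith [Real.rpow_nonneg (hε n) p, h']
      obtain ⟨N, hN⟩ := Filter.eventually_atTop.mp hev
      rw [← summable_nat_add_iff N]
      refine Summable.of_nonneg_of_le (fun n => Real.rpow_nonneg (hd0 _) p)
        (fun n => hN (n + N) (Nat.le_add_left N n)) ?_
      exact (summable_nat_add_iff N).mpr (h1.add (h.mul_left (A ^ q)))
  -- rearrangement lemma
  have rearr : ∀ u v : ∀ n, X n,
      (Summable fun k => δ (T (Nat.unpair k).1 (u (Nat.unpair k).1) (Nat.unpair k).2)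
          (T (Nat.unpair k).1 (v (Nat.unpair k).1) (Nat.unpair k).2) ^ q) ↔
        Summable fun n => S n (u n) (v n) := by
    intro u v
    set F : ℕ × ℕ → ℝ := fun c => δ (T c.1 (u c.1) c.2) (T c.1 (v c.1) c.2) ^ q with hF
    have e1 : (Summable fun k => F (Nat.pairEquiv.symm k)) ↔ Summable F :=
      Equiv.summable_iff (α := ℝ) (β := ℕ × ℕ) (γ := ℕ) (f := F) Nat.pairEquiv.symm
    have e2 : Summable F ↔ (∀ n, Summable fun m => F (n, m)) ∧
        Summable fun n => ∑' m, F (n, m) :=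
      summable_prod_of_nonneg fun c => Real.rpow_nonneg (hδ.nonneg _ _) q
    constructor
    · intro h
      exact (e2.mp (e1.mp h)).2
    · intro h
      exact e1.mpr (e2.mpr ⟨fun n => hinner n (u n) (v n), h⟩)
  refine ⟨θ, ?_, ?_⟩
  · -- measurability
    letI : MeasurableSpace Y := borel Y
    haveI : BorelSpace Y := ⟨rfl⟩
    letI : ∀ n, MeasurableSpace (X n) := fun n => borel (X n)
    haveI : ∀ n, BorelSpace (X n) := fun n => ⟨rfl⟩
    have hb1 : (MeasurableSpace.pi : MeasurableSpace (∀ n, X n)) = borel (∀ n, X n) :=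
      BorelSpace.measurable_eq
    have hb2 : (MeasurableSpace.pi : MeasurableSpace (∀ k, Yset k)) = borel (∀ k, Yset k) :=
      BorelSpace.measurable_eq
    have hb3 : (MeasurableSpace.pi : MeasurableSpace (ℕ → Y)) = borel (ℕ → Y) :=
      BorelSpace.measurable_eq
    rw [← hb1, ← hb2]
    apply measurable_pi_lambda
    intro k
    apply Measurable.subtype_mk
    have hT : Measurable (T (Nat.unpair k).1) := by
      rw [hb3]; exact hTBorel _
    exact (measurable_pi_apply (Nat.unpair k).2).comp
      (hT.comp (measurable_pi_apply (Nat.unpair k).1))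
  · -- correctness
    intro x y
    show (Summable fun n => d n (x n) (y n) ^ p) ↔
      Summable fun k => δ (↑(θ x k)) (↑(θ y k)) ^ q
    rw [key x y]
    exact (rearr x y).symm
end

section
/- Let (Y, δ) be a Borel pseudo-metric space, Y_0 ⊆ Y_1 ⊆ Y_2 ⊆ ⋯ a sequence of Borel subsets of Y, let (X_n, d_n), n ∈ ℕ, be a sequence of separable Borel pseudo-metric spaces, and let p, q ∈ [1, +∞). Suppose there are constants A, C, D > 0, a point y* ∈ ∏_{n∈ℕ} Y_n, a sequence of Borel maps T_n : X_n → ℓ_q((Y_n)_{n∈ℕ}, y*), and a sequence of non-negative reals (ε_n) such that: (1) ∑_n ε_n^p < +∞; (2) for u, v ∈ X_n, d_n(u,v) ≥ C implies δ_q(T_n(u), T_n(v)) ≥ D; (3) ε_n ≤ d_n(u,v) < C implies A^{-1} d_n(u,v)^{p/q} ≤ δ_q(T_n(u), T_n(v)) ≤ A d_n(u,v)^{p/q}. Then E((X_n)_{n∈ℕ}; p) is Borel reducible to E((Y_n)_{n∈ℕ}; q). -/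
/-!
Choose, in each `X n`, a Borel map `φ n` onto a maximal `ε n`-separated subset of a countable
dense set, moving every point by at most `2 ε n`, and send `x` to the sequence
`⟨n, m⟩ ↦ T n (φ n (x n)) m`. Since `∑ ε n ^ p < ∞`, replacing `x n, y n` by their
discretizations does not change whether `∑ d n (x n) (y n) ^ p` converges. Distinct discretized
points are at distance at least `ε n`, where hypothesis (3) applies; when either series converges
its terms are eventually small, so (2) rules out the coarse regime and (3) makes the `n`-th terms
of the two series comparable up to the factor `A ^ q`.
-/

open Set Real

theorem Real.add_rpow_le_two_rpow_mul_rpow_add_rpow {a b p : ℝ} (ha : 0 ≤ a) (hb : 0 ≤ b)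
    (hp : 0 ≤ p) : (a + b) ^ p ≤ 2 ^ p * (a ^ p + b ^ p) := by
  wlog hba : b ≤ a generalizing a b
  · simpa only [add_comm] using this hb ha (le_of_not_ge hba)
  calc (a + b) ^ p ≤ (2 * a) ^ p := by gcongr; linarith
    _ = 2 ^ p * a ^ p := mul_rpow zero_le_two ha
    _ ≤ 2 ^ p * (a ^ p + b ^ p) := by gcongr; exact le_add_of_nonneg_right (rpow_nonneg hb p)

theorem Real.le_mul_rpow_of_rpow_one_div_le {x y A q : ℝ} (hx : 0 ≤ x) (hy : 0 ≤ y) (hA : 0 ≤ A)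
    (hq : 0 < q) (h : x ^ (1 / q) ≤ A * y ^ (1 / q)) : x ≤ A ^ q * y := by
  calc x = (x ^ (1 / q)) ^ q := by rw [← rpow_mul hx, one_div_mul_cancel hq.ne', rpow_one]
    _ ≤ (A * y ^ (1 / q)) ^ q := by gcongr
    _ = A ^ q * y := by
      rw [mul_rpow hA (rpow_nonneg hy _), ← rpow_mul hy, one_div_mul_cancel hq.ne', rpow_one]

theorem summable_rpow_of_le_add {ι : Type*} {a b c : ι → ℝ} {p : ℝ} (hp : 0 ≤ p)
    (ha : ∀ n, 0 ≤ a n) (hb : ∀ n, 0 ≤ b n) (hc : ∀ n, 0 ≤ c n) (hle : ∀ n, c n ≤ a n + b n)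
    (hsa : Summable fun n => a n ^ p) (hsb : Summable fun n => b n ^ p) :
    Summable fun n => c n ^ p :=
  ((hsa.add hsb).mul_left (2 ^ p)).of_nonneg_of_le (fun n => rpow_nonneg (hc n) p) fun n =>
    (rpow_le_rpow (hc n) (hle n) hp).trans
      (add_rpow_le_two_rpow_mul_rpow_add_rpow (ha n) (hb n) hp)

theorem summable_of_le_mul_of_lt {ι : Type*} {f g : ι → ℝ} {K c : ℝ} (hf : Summable f)
    (hc : 0 < c) (hg : ∀ n, 0 ≤ g n) (hle : ∀ n, f n < c → g n ≤ K * f n) : Summable g :=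
  (hf.mul_left K).of_norm_bounded_eventually <| by
    filter_upwards [hf.tendsto_cofinite_zero.eventually_lt_const hc] with n hn
    rw [norm_of_nonneg (hg n)]
    exact hle n hn

theorem summable_unpair_iff {f : ℕ → ℕ → ℝ} (hf0 : ∀ n m, 0 ≤ f n m)
    (hf : ∀ n, Summable (f n)) :
    (Summable fun k : ℕ => f k.unpair.1 k.unpair.2) ↔ Summable fun n => ∑' m, f n m := by
  have hcomp : (fun k : ℕ => f k.unpair.1 k.unpair.2) ∘ Nat.pairEquiv = fun nm => f nm.1 nm.2 := by
    funext ⟨n, m⟩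
    exact congrArg (fun nm : ℕ × ℕ => f nm.1 nm.2) (Nat.unpair_pair n m)
  rw [← Nat.pairEquiv.summable_iff, hcomp, summable_prod_of_nonneg fun nm => hf0 nm.1 nm.2]
  exact and_iff_right hf

theorem summable_rpow_iff_of_comparable {ι : Type*} {a s e B : ι → ℝ} {p K C D : ℝ}
    (hp : 0 < p) (ha : ∀ n, 0 ≤ a n) (hs : ∀ n, 0 ≤ s n) (he : ∀ n, 0 ≤ e n)
    (hB : ∀ n, 0 ≤ B n) (hC : 0 < C) (hD : 0 < D)
    (has : ∀ n, a n ≤ s n + 4 * e n) (hsa : ∀ n, s n ≤ a n + 4 * e n)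
    (hse : Summable fun n => e n ^ p)
    (hsmall : ∀ n, s n < C → B n ≤ K * s n ^ p) (hlarge : ∀ n, B n < D → s n ^ p ≤ K * B n) :
    (Summable fun n => a n ^ p) ↔ Summable B := by
  have h4e : Summable fun n => (4 * e n) ^ p := by
    simpa only [mul_rpow zero_le_four (he _)] using hse.mul_left (4 ^ p)
  have h4e0 : ∀ n, 0 ≤ 4 * e n := fun n => mul_nonneg zero_le_four (he n)
  refine ⟨fun h => ?_, fun h => ?_⟩
  · have hsp := summable_rpow_of_le_add hp.le ha h4e0 hs hsa h h4e
    refine summable_of_le_mul_of_lt hsp (rpow_pos_of_pos hC p) hB fun n hn => hsmall n ?_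
    exact (rpow_lt_rpow_iff (hs n) hC.le hp).mp hn
  · have hsp := summable_of_le_mul_of_lt h hD (fun n => rpow_nonneg (hs n) p) hlarge
    exact summable_rpow_of_le_add hp.le hs h4e0 ha has hsp h4e

namespace IsPseudometric

variable {X : Type*} {d : X → X → ℝ}

theorem dist_le_dist_add_of_le (hd : IsPseudometric d) {x y x' y' : X} {e : ℝ}
    (hx : d x x' ≤ 2 * e) (hy : d y y' ≤ 2 * e) : d x y ≤ d x' y' + 4 * e := by
  linarith [hd.triangle x x' y, hd.triangle x' y' y, hd.symm y y']

theorem summable_rpow {ι : Type*} (hd : IsPseudometric d) {q : ℝ} (hq : 0 ≤ q)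
    {f g z : ι → X} (hf : Summable fun m => d (f m) (z m) ^ q)
    (hg : Summable fun m => d (g m) (z m) ^ q) : Summable fun m => d (f m) (g m) ^ q :=
  summable_rpow_of_le_add hq (fun _ => hd.nonneg _ _) (fun _ => hd.nonneg _ _)
    (fun _ => hd.nonneg _ _) (fun m => (hd.triangle _ (z m) _).trans_eq (by rw [hd.symm (z m)]))
    hf hg

theorem exists_separated_subset_near (hd : IsPseudometric d) {S : Set X} {v : X} (hv : v ∈ S)
    {ε : ℝ} (hε : 0 < ε) :
    ∃ N ⊆ S, v ∈ N ∧ N.Pairwise (fun a b => ε ≤ d a b) ∧ ∀ w ∈ S, ∃ a ∈ N, d w a < ε := by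
  obtain ⟨N, hvN, hmax⟩ := zorn_subset_nonempty {N | N ⊆ S ∧ N.Pairwise fun a b => ε ≤ d a b}
    (fun c hcS hc _ => ⟨⋃₀ c, ⟨sUnion_subset fun N hN => (hcS hN).1,
      (pairwise_sUnion hc.directedOn).2 fun N hN => (hcS hN).2⟩,
      fun N hN => subset_sUnion_of_mem hN⟩)
    {v} ⟨singleton_subset_iff.2 hv, pairwise_singleton _ _⟩
  refine ⟨N, hmax.prop.1, hvN rfl, hmax.prop.2, fun w hw => ?_⟩
  by_contra! hfar
  have hwN : w ∈ N := hmax.mem_of_prop_insert ⟨insert_subset hw hmax.prop.1,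
    hmax.prop.2.insert fun a ha _ => ⟨hfar a ha, hd.symm w a ▸ hfar a ha⟩⟩
  linarith [hfar w hwN, hd.refl w]

theorem exists_measurable_discretization [MeasurableSpace X] (hd : IsPseudometric d)
    (hdm : ∀ c, Measurable fun u => d u c) {S : Set X} (hS : S.Countable)
    (hdense : ∀ u : X, ∀ e : ℝ, 0 < e → ∃ v ∈ S, d u v < e) {ε : ℝ} (hε : 0 ≤ ε) :
    ∃ φ : X → X, Measurable φ ∧ (∀ u, d u (φ u) ≤ 2 * ε) ∧
      ∀ u v, φ u = φ v ∨ ε ≤ d (φ u) (φ v) := by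
  rcases hε.eq_or_lt with rfl | hε
  · exact ⟨id, measurable_id, fun u => by simp [hd.refl], fun u v => Or.inr (hd.nonneg _ _)⟩
  rcases isEmpty_or_nonempty X with hX | ⟨⟨u₀⟩⟩
  · exact ⟨id, measurable_id, isEmptyElim, isEmptyElim⟩
  obtain ⟨v₀, hv₀, -⟩ := hdense u₀ 1 one_pos
  obtain ⟨N, hNS, hv₀N, hNsep, hNnear⟩ := hd.exists_separated_subset_near hv₀ hε
  obtain ⟨t, rfl⟩ := (hS.mono hNS).exists_eq_range ⟨v₀, hv₀N⟩
  have hnear : ∀ u, ∃ k, d u (t k) < 2 * ε := fun u => by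
    obtain ⟨v, hvS, huv⟩ := hdense u ε hε
    obtain ⟨_, ⟨k, rfl⟩, hvk⟩ := hNnear v hvS
    exact ⟨k, by linarith [hd.triangle u v (t k)]⟩
  classical
  refine ⟨fun u => t (Nat.find (hnear u)),
    measurable_from_nat.comp (measurable_find hnear fun k => hdm (t k) measurableSet_Iio),
    fun u => (Nat.find_spec (hnear u)).le, fun u v => ?_⟩
  exact (em _).imp_right (hNsep (mem_range_self _) (mem_range_self _))

end IsPseudometric

section Coordinate

variable {X Y : Type*} {d : X → X → ℝ} {δ : Y → Y → ℝ} {T : X → ℕ → Y} {p q A C D ε : ℝ}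
  {u v : X}

theorem tsum_rpow_le_of_dist_lt (hd : IsPseudometric d) (hδ : IsPseudometric δ) (hq : 0 < q)
    (hA : 0 < A) (huv : u = v ∨ ε ≤ d u v) (hlt : d u v < C)
    (h3 : ε ≤ d u v → d u v < C →
      (∑' m, δ (T u m) (T v m) ^ q) ^ (1 / q) ≤ A * d u v ^ (p / q)) :
    ∑' m, δ (T u m) (T v m) ^ q ≤ A ^ q * d u v ^ p := by
  rcases huv with rfl | hε
  · simp only [hδ.refl, zero_rpow hq.ne', tsum_zero]
    exact mul_nonneg (rpow_nonneg hA.le q) (rpow_nonneg (hd.nonneg u u) p)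
  refine le_mul_rpow_of_rpow_one_div_le (tsum_nonneg fun m => rpow_nonneg (hδ.nonneg _ _) q)
    (rpow_nonneg (hd.nonneg u v) p) hA.le hq ?_
  rw [← rpow_mul (hd.nonneg u v), mul_one_div]
  exact h3 hε hlt

theorem rpow_dist_le_of_tsum_lt (hd : IsPseudometric d) (hδ : IsPseudometric δ) (hp : 0 < p)
    (hq : 0 < q) (hA : 0 < A) (hD : 0 < D) (huv : u = v ∨ ε ≤ d u v)
    (hlt : ∑' m, δ (T u m) (T v m) ^ q < D ^ q)
    (h2 : C ≤ d u v → D ≤ (∑' m, δ (T u m) (T v m) ^ q) ^ (1 / q))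
    (h3 : ε ≤ d u v → d u v < C →
      A⁻¹ * d u v ^ (p / q) ≤ (∑' m, δ (T u m) (T v m) ^ q) ^ (1 / q)) :
    d u v ^ p ≤ A ^ q * ∑' m, δ (T u m) (T v m) ^ q := by
  have hB : 0 ≤ ∑' m, δ (T u m) (T v m) ^ q := tsum_nonneg fun m => rpow_nonneg (hδ.nonneg _ _) q
  rcases huv with rfl | hε
  · rw [hd.refl, zero_rpow hp.ne']
    exact mul_nonneg (rpow_nonneg hA.le q) hB
  have hC : d u v < C := by
    by_contra! hC
    have := h2 hC
    rw [one_div, le_rpow_inv_iff_of_pos hD.le hB hq] at this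
    exact hlt.not_ge this
  refine le_mul_rpow_of_rpow_one_div_le (rpow_nonneg (hd.nonneg u v) p) hB hA.le hq ?_
  rw [← rpow_mul (hd.nonneg u v), mul_one_div, ← inv_mul_le_iff₀ hA]
  exact h3 hε hC

end Coordinate

theorem stmt1_general
    {Y : Type*} [TopologicalSpace Y] [PolishSpace Y]
    (δ : Y → Y → ℝ) (hδ : IsPseudometric δ)
    (Yset : ℕ → Set Y)
    (hYmono : ∀ n, Yset n ⊆ Yset (n + 1))
    {X : ℕ → Type*} [∀ n, TopologicalSpace (X n)]
    (d : ∀ n, X n → X n → ℝ) (hd : ∀ n, IsPseudometric (d n))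
    (hdBorel : ∀ n,
      @Measurable (X n × X n) ℝ (borel (X n × X n)) (borel ℝ) fun pr => d n pr.1 pr.2)
    -- each pseudo-metric space `(X n, d n)` is separable:
    (hsep : ∀ n, ∃ S : Set (X n), S.Countable ∧
      ∀ u : X n, ∀ e : ℝ, 0 < e → ∃ v ∈ S, d n u v < e)
    (p q : ℝ) (hp : 1 ≤ p) (hq : 1 ≤ q)
    (A C D : ℝ) (hA : 0 < A) (hC : 0 < C) (hD : 0 < D)
    (ystar : ℕ → Y)
    (T : ∀ n, X n → ℕ → Y)
    (hTmem : ∀ n u m, T n u m ∈ Yset m)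
    (hTlq : ∀ n u, Summable fun m => δ (T n u m) (ystar m) ^ q)
    (hTBorel : ∀ n, @Measurable (X n) (ℕ → Y) (borel (X n)) (borel (ℕ → Y)) (T n))
    (ε : ℕ → ℝ) (hε : ∀ n, 0 ≤ ε n)
    (h1 : Summable fun n => ε n ^ p)
    (h2 : ∀ n u v, C ≤ d n u v →
      D ≤ (∑' m, δ (T n u m) (T n v m) ^ q) ^ (1 / q))
    (h3 : ∀ n u v, ε n ≤ d n u v → d n u v < C →
      A⁻¹ * d n u v ^ (p / q) ≤ (∑' m, δ (T n u m) (T n v m) ^ q) ^ (1 / q) ∧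
      (∑' m, δ (T n u m) (T n v m) ^ q) ^ (1 / q) ≤ A * d n u v ^ (p / q)) :
    BorelReducible
      (fun x y : ∀ n, X n => Summable fun n => d n (x n) (y n) ^ p)
      (fun x y : ∀ n, Yset n => Summable fun n => δ (x n : Y) (y n : Y) ^ q) := by
  let _ : MeasurableSpace Y := borel Y
  have _ : BorelSpace Y := ⟨rfl⟩
  let _ : ∀ n, MeasurableSpace (X n) := fun n => borel (X n)
  let _ : MeasurableSpace (∀ n, X n) := borel _
  have hp0 : 0 < p := zero_lt_one.trans_le hp
  have hq0 : 0 < q := zero_lt_one.trans_le hq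
  choose φ hφm hφd hφsep using fun n => (hsep n).elim fun S hS =>
    (hd n).exists_measurable_discretization
      (fun c => (hdBorel n).comp (continuous_id.prodMk continuous_const).borel_measurable)
      hS.1 hS.2 (hε n)
  have hYset : ∀ {i j}, i ≤ j → Yset i ⊆ Yset j := fun h => monotone_nat_of_le_succ hYmono h
  refine ⟨fun x k => ⟨T k.unpair.1 (φ _ (x k.unpair.1)) k.unpair.2,
    hYset (Nat.unpair_right_le k) (hTmem _ _ _)⟩, ?_, fun x y => ?_⟩
  · rw [← BorelSpace.measurable_eq (α := ∀ k, Yset k)]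
    refine measurable_pi_iff.2 fun k => Measurable.subtype_mk ?_
    exact (measurable_pi_apply _).comp (((hTBorel _).mono le_rfl pi_le_borel_pi).comp
      ((hφm _).comp (continuous_apply _).borel_measurable))
  refine Iff.trans ?_ (summable_unpair_iff
    (f := fun n m => δ (T n (φ n (x n)) m) (T n (φ n (y n)) m) ^ q)
    (fun n m => rpow_nonneg (hδ.nonneg _ _) q)
    fun n => hδ.summable_rpow hq0.le (hTlq n _) (hTlq n _)).symm
  refine summable_rpow_iff_of_comparable (s := fun n => d n (φ n (x n)) (φ n (y n))) hp0
    (fun n => (hd n).nonneg _ _) (fun n => (hd n).nonneg _ _) hε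
    (fun n => tsum_nonneg fun m => rpow_nonneg (hδ.nonneg _ _) q) hC (rpow_pos_of_pos hD q)
    (fun n => (hd n).dist_le_dist_add_of_le (hφd n _) (hφd n _))
    (fun n => (hd n).dist_le_dist_add_of_le (((hd n).symm _ _).trans_le (hφd n _))
      (((hd n).symm _ _).trans_le (hφd n _))) h1
    (fun n hlt => tsum_rpow_le_of_dist_lt (hd n) hδ hq0 hA (hφsep n _ _) hlt
      fun h h' => (h3 n _ _ h h').2)
    fun n hlt => rpow_dist_le_of_tsum_lt (hd n) hδ hp0 hq0 hA hD (hφsep n _ _) hlt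
      (h2 n _ _) fun h h' => (h3 n _ _ h h').1

theorem stmt1
    {Y : Type*} [TopologicalSpace Y] [PolishSpace Y]
    (δ : Y → Y → ℝ) (hδ : IsPseudometric δ)
    (hδBorel : @Measurable (Y × Y) ℝ (borel (Y × Y)) (borel ℝ) fun pr => δ pr.1 pr.2)
    (Yset : ℕ → Set Y)
    (hYBorel : ∀ n, @MeasurableSet Y (borel Y) (Yset n))
    (hYmono : ∀ n, Yset n ⊆ Yset (n + 1))
    {X : ℕ → Type*} [∀ n, TopologicalSpace (X n)] [∀ n, PolishSpace (X n)]
    (d : ∀ n, X n → X n → ℝ) (hd : ∀ n, IsPseudometric (d n))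
    (hdBorel : ∀ n,
      @Measurable (X n × X n) ℝ (borel (X n × X n)) (borel ℝ) fun pr => d n pr.1 pr.2)
    -- each pseudo-metric space `(X n, d n)` is separable:
    (hsep : ∀ n, ∃ S : Set (X n), S.Countable ∧
      ∀ u : X n, ∀ e : ℝ, 0 < e → ∃ v ∈ S, d n u v < e)
    (p q : ℝ) (hp : 1 ≤ p) (hq : 1 ≤ q)
    (A C D : ℝ) (hA : 0 < A) (hC : 0 < C) (hD : 0 < D)
    (ystar : ℕ → Y) (hystar : ∀ n, ystar n ∈ Yset n)
    (T : ∀ n, X n → ℕ → Y)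
    (hTmem : ∀ n u m, T n u m ∈ Yset m)
    (hTlq : ∀ n u, Summable fun m => δ (T n u m) (ystar m) ^ q)
    (hTBorel : ∀ n, @Measurable (X n) (ℕ → Y) (borel (X n)) (borel (ℕ → Y)) (T n))
    (ε : ℕ → ℝ) (hε : ∀ n, 0 ≤ ε n)
    (h1 : Summable fun n => ε n ^ p)
    (h2 : ∀ n u v, C ≤ d n u v →
      D ≤ (∑' m, δ (T n u m) (T n v m) ^ q) ^ (1 / q))
    (h3 : ∀ n u v, ε n ≤ d n u v → d n u v < C →
      A⁻¹ * d n u v ^ (p / q) ≤ (∑' m, δ (T n u m) (T n v m) ^ q) ^ (1 / q) ∧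
      (∑' m, δ (T n u m) (T n v m) ^ q) ^ (1 / q) ≤ A * d n u v ^ (p / q)) :
    BorelReducible
      (fun x y : ∀ n, X n => Summable fun n => d n (x n) (y n) ^ p)
      (fun x y : ∀ n, Yset n => Summable fun n => δ (x n : Y) (y n : Y) ^ q) :=
  stmt1_general δ hδ Yset hYmono d hd hdBorel hsep p q hp hq A C D hA hC hD ystar T hTmem hTlq
    hTBorel ε hε h1 h2 h3
end

section
/- Let (X_n, d_n), n ∈ ℕ, be a sequence of separable Borel pseudo-metric spaces, p ∈ [1, +∞), and for each n let S_n = {s^n_m : m ∈ ℕ} be a countable dense subset of X_n on which d_n is a metric (i.e. d_n(s^n_m, s^n_k) > 0 for m ≠ k). Then E((X_n)_{n∈ℕ}; p) and E((S_n)_{n∈ℕ}; p) are Borel bireducible. -/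
/-- `E` and `F` are Borel bireducible. -/
def BorelBireducible {α β : Type*} [TopologicalSpace α] [TopologicalSpace β]
    (E : α → α → Prop) (F : β → β → Prop) : Prop :=
  BorelReducible E F ∧ BorelReducible F E

/-!
Approximating each coordinate of `x` within `2⁻ⁿ` by the first point of the dense set `Sₙ`
that is close enough gives a Borel map `θ` with `x E θ x` for every `x`; as `E` is an
equivalence relation (Minkowski's inequality), `x E y ↔ θ x E θ y`. Conversely, the inclusion
of `∏ Sₙ` into `∏ Xₙ` is a reduction.
-/

lemma measurable_borel_iff {α β : Type*} [TopologicalSpace α] [TopologicalSpace β]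
    [MeasurableSpace α] [MeasurableSpace β] [BorelSpace α] [BorelSpace β] {f : α → β} :
    @Measurable α β (borel α) (borel β) f ↔ Measurable f := by
  rw [← BorelSpace.measurable_eq (α := α), ← BorelSpace.measurable_eq (α := β)]

lemma summable_two_inv_pow_rpow {p : ℝ} (hp : 0 < p) :
    Summable fun n : ℕ => ((2⁻¹ : ℝ) ^ n) ^ p := by
  simp_rw [← Real.rpow_pow_comm (by norm_num : (0 : ℝ) ≤ 2⁻¹)]
  exact summable_geometric_of_lt_one (by positivity)
    (Real.rpow_lt_one (by norm_num) (by norm_num) hp)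

lemma exists_measurable_approx {X : Type*} [MeasurableSpace X] {d : X → X → ℝ} {s : ℕ → X}
    (hd : ∀ m, Measurable fun u => d u (s m)) {ε : ℝ} (hdense : ∀ u, ∃ m, d u (s m) < ε) :
    ∃ f : X → Set.range s, Measurable f ∧ ∀ u, d u (f u) < ε := by
  classical
  refine ⟨fun u => ⟨s (Nat.find (hdense u)), Set.mem_range_self _⟩, ?_,
    fun u => Nat.find_spec (hdense u)⟩
  exact Measurable.find (f := fun m _ => (⟨s m, Set.mem_range_self m⟩ : Set.range s))
    (fun _ => measurable_const)
    (fun m => measurableSet_lt (hd m) measurable_const) hdense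

section LpRel

variable {ι : Type*} {X : ι → Type*} {d : ∀ i, X i → X i → ℝ} {p : ℝ}

/-- The `ℓ_p`-like relation `E((X_i)_i; p)` on `∀ i, X i`. -/
def LpRel (d : ∀ i, X i → X i → ℝ) (p : ℝ) (x y : ∀ i, X i) : Prop :=
  Summable fun i => d i (x i) (y i) ^ p

lemma LpRel.symm (hd : ∀ i, IsPseudometric (d i)) {x y : ∀ i, X i} (h : LpRel d p x y) :
    LpRel d p y x := by
  simpa only [LpRel, (hd _).symm (y _)] using h

lemma lpRel_of_le (hd : ∀ i, IsPseudometric (d i)) (hp : 0 ≤ p) {x y : ∀ i, X i}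
    {ε : ι → ℝ} (hε : Summable fun i => ε i ^ p) (hle : ∀ i, d i (x i) (y i) ≤ ε i) :
    LpRel d p x y :=
  hε.of_nonneg_of_le (fun i => Real.rpow_nonneg ((hd i).nonneg _ _) p)
    fun i => Real.rpow_le_rpow ((hd i).nonneg _ _) (hle i) hp

lemma LpRel.trans (hd : ∀ i, IsPseudometric (d i)) (hp : 1 ≤ p) {x y z : ∀ i, X i}
    (hxy : LpRel d p x y) (hyz : LpRel d p y z) : LpRel d p x z :=
  lpRel_of_le hd (by linarith)
    (Real.summable_Lp_add_of_nonneg hp (fun i => (hd i).nonneg _ _) (fun i => (hd i).nonneg _ _)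
      hxy hyz)
    fun i => (hd i).triangle _ (y i) _

lemma LpRel.iff_of_left_right (hd : ∀ i, IsPseudometric (d i)) (hp : 1 ≤ p)
    {x x' y y' : ∀ i, X i} (hx : LpRel d p x x') (hy : LpRel d p y y') :
    LpRel d p x y ↔ LpRel d p x' y' :=
  ⟨fun h => ((hx.symm hd).trans hd hp h).trans hd hp hy,
    fun h => (hx.trans hd hp h).trans hd hp (hy.symm hd)⟩

end LpRel

theorem stmt2_general
    {X : ℕ → Type*} [∀ n, TopologicalSpace (X n)] [∀ n, PolishSpace (X n)]
    (d : ∀ n, X n → X n → ℝ) (hd : ∀ n, IsPseudometric (d n))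
    (hdBorel : ∀ n,
      @Measurable (X n × X n) ℝ (borel (X n × X n)) (borel ℝ) fun pr => d n pr.1 pr.2)
    (p : ℝ) (hp : 1 ≤ p)
    -- `S n = {s n m : m ∈ ℕ}` is a countable subset of `X n` on which `d n` is a metric,
    (s : ∀ n, ℕ → X n)
    -- and `S n` is dense in `(X n, d n)`:
    (hdense : ∀ n, ∀ u : X n, ∀ e : ℝ, 0 < e → ∃ m : ℕ, d n u (s n m) < e) :
    BorelBireducible
      (fun x y : ∀ n, X n => Summable fun n => d n (x n) (y n) ^ p)
      (fun x y : ∀ n, Set.range (s n) =>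
        Summable fun n => d n (x n : X n) (y n : X n) ^ p) := by
  let _ : ∀ n, MeasurableSpace (X n) := fun n => borel (X n)
  have _ : ∀ n, BorelSpace (X n) := fun n => ⟨rfl⟩
  have hdist : ∀ n m, Measurable fun u : X n => d n u (s n m) := fun n m =>
    (measurable_borel_iff.mp (hdBorel n)).comp (measurable_id.prodMk measurable_const)
  choose f hf_meas hf_close using fun n =>
    exists_measurable_approx (hdist n) fun u =>
      hdense n u _ (pow_pos (by norm_num : (0 : ℝ) < 2⁻¹) n)
  have hθ : ∀ x : ∀ n, X n, LpRel d p x fun n => (f n (x n) : X n) := fun x =>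
    lpRel_of_le hd (by linarith) (summable_two_inv_pow_rpow (by linarith))
      fun n => (hf_close n (x n)).le
  refine ⟨⟨fun x n => f n (x n), ?_, fun x y => (hθ x).iff_of_left_right hd hp (hθ y)⟩,
    ⟨fun x n => (x n : X n), ?_, fun _ _ => Iff.rfl⟩⟩
  · exact measurable_borel_iff.mpr
      (measurable_pi_lambda _ fun n => (hf_meas n).comp (measurable_pi_apply n))
  · exact measurable_borel_iff.mpr
      (measurable_pi_lambda _ fun n => measurable_subtype_coe.comp (measurable_pi_apply n))

theorem stmt2
    {X : ℕ → Type*} [∀ n, TopologicalSpace (X n)] [∀ n, PolishSpace (X n)]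
    (d : ∀ n, X n → X n → ℝ) (hd : ∀ n, IsPseudometric (d n))
    (hdBorel : ∀ n,
      @Measurable (X n × X n) ℝ (borel (X n × X n)) (borel ℝ) fun pr => d n pr.1 pr.2)
    (p : ℝ) (hp : 1 ≤ p)
    -- `S n = {s n m : m ∈ ℕ}` is a countable subset of `X n` on which `d n` is a metric,
    (s : ∀ n, ℕ → X n)
    (hmetric : ∀ n, ∀ m k : ℕ, m ≠ k → 0 < d n (s n m) (s n k))
    -- and `S n` is dense in `(X n, d n)`:
    (hdense : ∀ n, ∀ u : X n, ∀ e : ℝ, 0 < e → ∃ m : ℕ, d n u (s n m) < e) :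
    BorelBireducible
      (fun x y : ∀ n, X n => Summable fun n => d n (x n) (y n) ^ p)
      (fun x y : ∀ n, Set.range (s n) =>
        Summable fun n => d n (x n : X n) (y n : X n) ^ p) :=
  stmt2_general d hd hdBorel p hp s hdense
end

section
/- Let (S_n, d_n), n ∈ ℕ, be a sequence of countable metric spaces, p ∈ [1, +∞), and let (S̄_n, d̄_n) denote the completion of (S_n, d_n). Then E((S̄_n)_{n∈ℕ}; p) and E((S_n)_{n∈ℕ}; p) are Borel bireducible. -/
def lpLikeRel {ι : Type*} (X : ι → Type*) [∀ i, PseudoMetricSpace (X i)] (p : ℝ)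
    (x y : ∀ i, X i) : Prop :=
  Summable fun i => dist (x i) (y i) ^ p

open UniformSpace

section Summability

variable {ι : Type*} {p : ℝ} {a b c : ι → ℝ}

theorem Summable.rpow_of_le_add (hp : 1 ≤ p) (ha : 0 ≤ a) (hb : 0 ≤ b) (hc : 0 ≤ c)
    (hab : ∀ i, a i ≤ b i + c i) (hsb : Summable fun i => b i ^ p)
    (hsc : Summable fun i => c i ^ p) :
    Summable fun i => a i ^ p :=
  (Real.Lp_add_le_tsum_of_nonneg hp hb hc hsb hsc).1.of_nonneg_of_le
    (fun i => Real.rpow_nonneg (ha i) p)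
    fun i => Real.rpow_le_rpow (ha i) (hab i) (zero_le_one.trans hp)

theorem summable_rpow_iff_of_abs_sub_le (hp : 1 ≤ p) (ha : 0 ≤ a) (hb : 0 ≤ b)
    (hab : ∀ i, |a i - b i| ≤ c i) (hc : Summable fun i => c i ^ p) :
    (Summable fun i => a i ^ p) ↔ Summable fun i => b i ^ p := by
  have hc0 : 0 ≤ c := fun i => (abs_nonneg _).trans (hab i)
  refine ⟨fun hsa => hsa.rpow_of_le_add hp hb ha hc0 (fun i => ?_) hc,
    fun hsb => hsb.rpow_of_le_add hp ha hb hc0 (fun i => ?_) hc⟩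
  · linarith [neg_abs_le (a i - b i), hab i]
  · linarith [le_abs_self (a i - b i), hab i]

theorem summable_half_pow_rpow (hp : 1 ≤ p) : Summable fun n : ℕ => ((1 / 2 : ℝ) ^ n) ^ p :=
  summable_geometric_two.of_nonneg_of_le (fun _ => by positivity) fun _ =>
    Real.rpow_le_self_of_le_one (by positivity) (pow_le_one₀ (by norm_num) (by norm_num)) hp

end Summability

theorem borelReducible_lpLikeRel_of_abs_dist_sub_le {ι : Type*} [Countable ι]
    {X Y : ι → Type*} [∀ i, PseudoMetricSpace (X i)] [∀ i, PseudoMetricSpace (Y i)]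
    [∀ i, SecondCountableTopology (X i)] [∀ i, SecondCountableTopology (Y i)]
    {p : ℝ} (hp : 1 ≤ p) (θ : ∀ i, X i → Y i)
    (hθ : ∀ i, @Measurable _ _ (borel (X i)) (borel (Y i)) (θ i)) {c : ι → ℝ}
    (hc : Summable fun i => c i ^ p) (hθc : ∀ i x y, |dist (θ i x) (θ i y) - dist x y| ≤ c i) :
    BorelReducible (lpLikeRel X p) (lpLikeRel Y p) := by
  let _ : ∀ i, MeasurableSpace (X i) := fun i => borel (X i)
  let _ : ∀ i, MeasurableSpace (Y i) := fun i => borel (Y i)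
  have : ∀ i, BorelSpace (X i) := fun _ => ⟨rfl⟩
  have : ∀ i, BorelSpace (Y i) := fun _ => ⟨rfl⟩
  refine ⟨fun x i => θ i (x i), ?_, fun x y => ?_⟩
  · rw [← BorelSpace.measurable_eq (α := ∀ i, X i), ← BorelSpace.measurable_eq (α := ∀ i, Y i)]
    exact measurable_pi_lambda _ fun i => (hθ i).comp (measurable_pi_apply i)
  · exact (summable_rpow_iff_of_abs_sub_le hp (fun _ => dist_nonneg) (fun _ => dist_nonneg)
      (fun i => hθc i (x i) (y i)) hc).symm

theorem DenseRange.exists_measurable_dist_lt {α β : Type*} [Countable α] [MeasurableSpace α]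
    [PseudoMetricSpace β] [MeasurableSpace β] [OpensMeasurableSpace β] {f : α → β}
    (hf : DenseRange f) {ε : ℝ} (hε : 0 < ε) :
    ∃ g : β → α, Measurable g ∧ ∀ z, dist (f (g z)) z < ε := by
  classical
  cases isEmpty_or_nonempty α
  · have : IsEmpty β := by rwa [← not_nonempty_iff, ← hf.nonempty_iff, not_nonempty_iff]
    exact ⟨isEmptyElim, measurable_of_empty _, isEmptyElim⟩
  obtain ⟨e, he⟩ := exists_surjective_nat α
  have hnear : ∀ z, ∃ k, z ∈ Metric.ball (f (e k)) ε := fun z => by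
    obtain ⟨a, ha⟩ := hf.exists_dist_lt z hε
    obtain ⟨k, rfl⟩ := he a
    exact ⟨k, ha⟩
  exact ⟨fun z => e (Nat.find (hnear z)),
    measurable_from_nat.comp (measurable_find hnear fun _ => Metric.isOpen_ball.measurableSet),
    fun z => Metric.mem_ball'.mp (Nat.find_spec (hnear z))⟩

theorem stmt3
    {S : ℕ → Type*} [∀ n, MetricSpace (S n)] [∀ n, Countable (S n)]
    (p : ℝ) (hp : 1 ≤ p) :
    BorelBireducible
      (fun x y : ∀ n, UniformSpace.Completion (S n) =>
        Summable fun n => dist (x n) (y n) ^ p)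
      (fun x y : ∀ n, S n => Summable fun n => dist (x n) (y n) ^ p) := by
  have hcoe : BorelReducible (lpLikeRel S p) (lpLikeRel (fun n => Completion (S n)) p) :=
    borelReducible_lpLikeRel_of_abs_dist_sub_le hp (fun _ => (↑))
      (fun _ => (Completion.continuous_coe _).borel_measurable) (c := 0)
      (by simp [Real.zero_rpow (by linarith : p ≠ 0)]) fun _ x y => by simp [Completion.dist_eq]
  have happrox : ∀ n, ∃ g : Completion (S n) → S n, @Measurable _ _ (borel _) (borel _) g ∧
      ∀ z, dist (g z : Completion (S n)) z < (1 / 2) ^ (n + 1) := fun n => by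
    borelize (Completion (S n)) (S n)
    exact Completion.denseRange_coe.exists_measurable_dist_lt (by positivity)
  choose g hg_meas hg_dist using happrox
  refine ⟨borelReducible_lpLikeRel_of_abs_dist_sub_le hp g hg_meas (summable_half_pow_rpow hp)
    fun n x y => ?_, hcoe⟩
  rw [← Completion.dist_eq, ← Real.dist_eq]
  calc _ ≤ dist (g n x : Completion (S n)) x + dist (g n y : Completion (S n)) y :=
        dist_dist_dist_le _ _ _ _
    _ ≤ (1 / 2) ^ (n + 1) + (1 / 2) ^ (n + 1) := add_le_add (hg_dist n x).le (hg_dist n y).le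
    _ = (1 / 2) ^ n := by ring
end

section
/- Let X, Y be two separable complete metric spaces and p, q ∈ [1, +∞). If X Hölder(p/q) embeds into ℓ_q(Y, y*) for some y* ∈ Y^ℕ, then E(X; p) is Borel reducible to E(Y; q). -/
/-!
The reduction concatenates the sequences `T (x n)`, `n ∈ ℕ`, along `ℕ ≃ ℕ × ℕ`. The `q`-th power
sum of two concatenations is `∑ₙ δ_q(T (x n), T (y n))^q`, and by the Hölder(p/q) bounds its
`n`-th term lies within a factor `A^q` of `d(x n, y n)^p`, so the two sums converge together.
The reduction is continuous, hence Borel, because each coordinate `u ↦ T u k` is Hölder(p/q).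
-/

open Filter Topology

namespace Real

lemma add_rpow_le_two_rpow_mul_rpow_add_rpow_s6 {a b p : ℝ} (ha : 0 ≤ a) (hb : 0 ≤ b)
    (hp : 0 ≤ p) : (a + b) ^ p ≤ 2 ^ p * (a ^ p + b ^ p) := calc
  (a + b) ^ p ≤ (2 * max a b) ^ p := by
    rw [two_mul]; gcongr <;> simp
  _ = 2 ^ p * max a b ^ p := mul_rpow zero_le_two (le_max_of_le_left ha)
  _ = 2 ^ p * max (a ^ p) (b ^ p) := by rw [rpow_max ha hb hp]
  _ ≤ 2 ^ p * (a ^ p + b ^ p) := by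
    gcongr; exact max_le_add_of_nonneg (rpow_nonneg ha p) (rpow_nonneg hb p)

lemma le_mul_rpow_of_rpow_one_div_le_s6 {a b C q : ℝ} (ha : 0 ≤ a) (hb : 0 ≤ b) (hC : 0 ≤ C)
    (hq : 0 < q) (h : a ^ (1 / q) ≤ C * b ^ (1 / q)) : a ≤ C ^ q * b := calc
  a = (a ^ (1 / q)) ^ q := by rw [← rpow_mul ha, one_div_mul_cancel hq.ne', rpow_one]
  _ ≤ (C * b ^ (1 / q)) ^ q := by gcongr
  _ = C ^ q * b := by
    rw [mul_rpow hC (by positivity), ← rpow_mul hb, one_div_mul_cancel hq.ne', rpow_one]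

lemma rpow_le_mul_and_le_mul_rpow_of_holder_bounds {A d S p q : ℝ} (hA : 0 < A) (hd : 0 ≤ d)
    (hS : 0 ≤ S) (hq : 0 < q)
    (h : A⁻¹ * d ^ (p / q) ≤ S ^ (1 / q) ∧ S ^ (1 / q) ≤ A * d ^ (p / q)) :
    d ^ p ≤ A ^ q * S ∧ S ≤ A ^ q * d ^ p := by
  have hdp : d ^ (p / q) = (d ^ p) ^ (1 / q) := by rw [← rpow_mul hd, mul_one_div]
  rw [hdp] at h
  refine ⟨le_mul_rpow_of_rpow_one_div_le_s6 (by positivity) hS hA.le hq ?_,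
    le_mul_rpow_of_rpow_one_div_le_s6 hS (by positivity) hA.le hq h.2⟩
  rw [inv_mul_le_iff₀ hA] at h
  exact h.1

end Real

lemma le_tsum_rpow_one_div {ι : Type*} {f : ι → ℝ} {q : ℝ} (hf : ∀ i, 0 ≤ f i) (hq : 0 < q)
    (hs : Summable fun i => f i ^ q) (k : ι) : f k ≤ (∑' i, f i ^ q) ^ (1 / q) := calc
  f k = (f k ^ q) ^ (1 / q) := by rw [one_div, Real.rpow_rpow_inv (hf k) hq.ne']
  _ ≤ (∑' i, f i ^ q) ^ (1 / q) := by
    gcongr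
    · exact Real.rpow_nonneg (hf k) q
    · exact hs.le_tsum k fun j _ => Real.rpow_nonneg (hf j) q

lemma summable_iff_of_le_const_mul {ι : Type*} {f g : ι → ℝ} {C : ℝ} (hf : ∀ i, 0 ≤ f i)
    (hg : ∀ i, 0 ≤ g i) (hfg : ∀ i, f i ≤ C * g i) (hgf : ∀ i, g i ≤ C * f i) :
    Summable f ↔ Summable g :=
  ⟨fun h => .of_nonneg_of_le hg hgf (h.mul_left C),
    fun h => .of_nonneg_of_le hf hfg (h.mul_left C)⟩

lemma summable_comp_unpair_iff {f : ℕ × ℕ → ℝ} (hf : ∀ nk, 0 ≤ f nk)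
    (hrow : ∀ n, Summable fun k => f (n, k)) :
    (Summable fun m : ℕ => f m.unpair) ↔ Summable fun n => ∑' k, f (n, k) :=
  Nat.pairEquiv.symm.summable_iff.trans <| (summable_prod_of_nonneg hf).trans (and_iff_right hrow)

section Metric

variable {X Y : Type*} [PseudoMetricSpace X] [PseudoMetricSpace Y]

lemma summable_dist_rpow_of_summable_dist_rpow {ι : Type*} {x y z : ι → Y} {q : ℝ}
    (hq : 0 ≤ q) (hx : Summable fun n => dist (x n) (z n) ^ q)
    (hy : Summable fun n => dist (y n) (z n) ^ q) :
    Summable fun n => dist (x n) (y n) ^ q := by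
  refine .of_nonneg_of_le (fun n => Real.rpow_nonneg dist_nonneg q) (fun n => ?_)
    ((hx.add hy).mul_left (2 ^ q))
  calc dist (x n) (y n) ^ q ≤ (dist (x n) (z n) + dist (y n) (z n)) ^ q := by
        gcongr; exact dist_triangle_right _ _ _
    _ ≤ 2 ^ q * (dist (x n) (z n) ^ q + dist (y n) (z n) ^ q) :=
        Real.add_rpow_le_two_rpow_mul_rpow_add_rpow_s6 dist_nonneg dist_nonneg hq

lemma continuous_of_dist_le_mul_rpow {f : X → Y} {C r : ℝ} (hr : 0 < r)
    (h : ∀ u v, dist (f u) (f v) ≤ C * dist u v ^ r) : Continuous f := by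
  refine continuous_iff_continuousAt.2 fun u => tendsto_iff_dist_tendsto_zero.2 ?_
  have hbound : Tendsto (fun v => C * dist v u ^ r) (𝓝 u) (𝓝 0) := by
    have := ((continuous_id.dist (continuous_const (y := u))).rpow_const
      fun _ => Or.inr hr.le).const_mul C |>.tendsto u
    simpa [Real.zero_rpow hr.ne'] using this
  exact squeeze_zero (fun _ => dist_nonneg) (fun v => h v u) hbound

end Metric

theorem stmt6_general
    {X Y : Type*} [MetricSpace X]
    [MetricSpace Y]
    (p q : ℝ) (hp : 1 ≤ p) (hq : 1 ≤ q)
    -- `X` Hölder(p/q) embeds into `ℓ_q(Y, y*)` for some `y* ∈ Y^ℕ`: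
    (hembed : ∃ ystar : ℕ → Y, ∃ A : ℝ, 0 < A ∧ ∃ T : X → ℕ → Y,
      (∀ u, Summable fun n => dist (T u n) (ystar n) ^ q) ∧
      ∀ u v,
        A⁻¹ * dist u v ^ (p / q) ≤ (∑' n, dist (T u n) (T v n) ^ q) ^ (1 / q) ∧
        (∑' n, dist (T u n) (T v n) ^ q) ^ (1 / q) ≤ A * dist u v ^ (p / q)) :
    BorelReducible
      (fun x y : ℕ → X => Summable fun n => dist (x n) (y n) ^ p)
      (fun x y : ℕ → Y => Summable fun n => dist (x n) (y n) ^ q) := by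
  obtain ⟨ystar, A, hA, T, hT_mem, hT⟩ := hembed
  have hq₀ : 0 < q := by linarith
  have hpq : 0 < p / q := div_pos (by linarith) hq₀
  have hrow : ∀ u v, Summable fun k => dist (T u k) (T v k) ^ q := fun u v =>
    summable_dist_rpow_of_summable_dist_rpow hq₀.le (hT_mem u) (hT_mem v)
  have hcont : ∀ k, Continuous fun u => T u k := fun k =>
    continuous_of_dist_le_mul_rpow hpq fun u v =>
      (le_tsum_rpow_one_div (fun _ => dist_nonneg) hq₀ (hrow u v) k).trans (hT u v).2
  refine ⟨fun x (m : ℕ) => T (x m.unpair.1) m.unpair.2,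
    (continuous_pi fun m => (hcont _).comp (continuous_apply _)).borel_measurable,
    fun x y => ?_⟩
  have hbounds := fun n => Real.rpow_le_mul_and_le_mul_rpow_of_holder_bounds hA dist_nonneg
    (tsum_nonneg fun _ => Real.rpow_nonneg dist_nonneg q) hq₀ (hT (x n) (y n))
  exact (summable_iff_of_le_const_mul (fun _ => Real.rpow_nonneg dist_nonneg p)
    (fun _ => tsum_nonneg fun _ => Real.rpow_nonneg dist_nonneg q)
    (fun n => (hbounds n).1) fun n => (hbounds n).2).trans
    (summable_comp_unpair_iff (f := fun nk => dist (T (x nk.1) nk.2) (T (y nk.1) nk.2) ^ q)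
      (fun _ => Real.rpow_nonneg dist_nonneg q) fun n => hrow (x n) (y n)).symm

theorem stmt6
    {X Y : Type*} [MetricSpace X] [TopologicalSpace.SeparableSpace X] [CompleteSpace X]
    [MetricSpace Y] [TopologicalSpace.SeparableSpace Y] [CompleteSpace Y]
    (p q : ℝ) (hp : 1 ≤ p) (hq : 1 ≤ q)
    -- `X` Hölder(p/q) embeds into `ℓ_q(Y, y*)` for some `y* ∈ Y^ℕ`:
    (hembed : ∃ ystar : ℕ → Y, ∃ A : ℝ, 0 < A ∧ ∃ T : X → ℕ → Y,
      (∀ u, Summable fun n => dist (T u n) (ystar n) ^ q) ∧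
      ∀ u v,
        A⁻¹ * dist u v ^ (p / q) ≤ (∑' n, dist (T u n) (T v n) ^ q) ^ (1 / q) ∧
        (∑' n, dist (T u n) (T v n) ^ q) ^ (1 / q) ≤ A * dist u v ^ (p / q)) :
    BorelReducible
      (fun x y : ℕ → X => Summable fun n => dist (x n) (y n) ^ p)
      (fun x y : ℕ → Y => Summable fun n => dist (x n) (y n) ^ q) :=
  stmt6_general p q hp hq hembed
end

section
/- Let (Z_n, d_n), n ∈ ℕ, be a sequence of finite metric spaces, (Y_n, δ_n), n ∈ ℕ, a sequence of separable complete metric spaces, q ∈ [1, +∞), Z = ∏_{n∈ℕ} Z_n, let θ : Z → ∏_{n∈ℕ} Y_n be a Borel function, and let C ⊆ Z be a dense G_δ set on which θ is continuous. Then for all j, k, l ∈ ℕ and every dense open set G ⊆ Z, there exists a finite sequence s** with s**(i) ∈ Z_{k+i} for i < len(s**) such that: (1) for all x, x̂ ∈ C, if x = r s** y and x̂ = r s** ŷ for some r ∈ ∏_{i<k} Z_i and y, ŷ ∈ ∏_{i ≥ k+len(s**)} Z_i (i.e. x and x̂ agree on the first k + len(s**) coordinates and have s** at positions [k, k+len(s**))),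 then ∑_{n < l} δ_n(θ(x)(n), θ(x̂)(n))^q < 2^{-j}; and (2) for every r ∈ ∏_{i<k} Z_i, the basic open set N_{r s**} = {z ∈ Z : z(i) = (r s**)(i) for i < k + len(s**)} is contained in G. -/
theorem stmt9
    {Y : ℕ → Type*} [∀ n, MetricSpace (Y n)]
    [∀ n, TopologicalSpace.SeparableSpace (Y n)] [∀ n, CompleteSpace (Y n)]
    {Z : ℕ → Type*} [∀ n, MetricSpace (Z n)] [∀ n, Finite (Z n)] [∀ n, Nonempty (Z n)]
    (q : ℝ) (hq : 1 ≤ q)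
    (θ : (∀ n, Z n) → ∀ n, Y n)
    (hθBorel : @Measurable (∀ n, Z n) (∀ n, Y n)
      (borel (∀ n, Z n)) (borel (∀ n, Y n)) θ)
    (C : Set (∀ n, Z n)) (hCdense : Dense C) (hCGδ : IsGδ C)
    (hθC : ContinuousOn θ C) :
    ∀ j k l : ℕ, ∀ G : Set (∀ n, Z n), IsOpen G → Dense G →
      ∃ L : ℕ, ∃ s : ∀ i : ℕ, Z (k + i),
        (∀ x x' : ∀ n, Z n, x ∈ C → x' ∈ C →
          (∀ i < k, x i = x' i) →
          (∀ i < L, x (k + i) = s i) → (∀ i < L, x' (k + i) = s i) →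
          (∑ n ∈ Finset.range l, dist (θ x n) (θ x' n) ^ q) < ((2 : ℝ) ^ j)⁻¹) ∧
        (∀ z : ∀ n, Z n, (∀ i < L, z (k + i) = s i) → z ∈ G) := by
  classical
  intro j k l G hGopen hGdense
  haveI : ∀ n, Fintype (Z n) := fun n => Fintype.ofFinite _
  have hq0 : (0 : ℝ) < q := lt_of_lt_of_le zero_lt_one hq
  -- neighborhood basis: basic clopen sets
  have hbasis : ∀ (U : Set (∀ n, Z n)), IsOpen U → ∀ z ∈ U,
      ∃ m : ℕ, ∀ x : ∀ n, Z n, (∀ i < m, x i = z i) → x ∈ U := by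
    intro U hU z hz
    rcases (isOpen_pi_iff.mp hU) z hz with ⟨I, u, hu, hsub⟩
    refine ⟨I.sup id + 1, fun x hx => hsub ?_⟩
    intro i hi
    have hxi : x i = z i := hx i (Nat.lt_succ_of_le (Finset.le_sup (f := id) hi))
    rw [hxi]
    exact (hu i hi).2
  -- basic clopen sets are open
  have hopenN : ∀ (w : ∀ n, Z n) (m : ℕ),
      IsOpen {z : ∀ n, Z n | ∀ i < m, z i = w i} := by
    intro w m
    have he : {z : ∀ n, Z n | ∀ i < m, z i = w i} =
        Set.pi (↑(Finset.range m)) (fun i => {w i}) := by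
      ext z
      simp [Set.mem_pi]
    rw [he]
    exact isOpen_set_pi (Finset.range m).finite_toSet (fun i _ => isOpen_discrete _)
  -- continuity of θ on C, in terms of basic sets
  have hcont : ∀ z ∈ C, ∀ ε : ℝ, 0 < ε → ∃ m : ℕ, ∀ x, x ∈ C →
      (∀ i < m, x i = z i) → ∀ n < l, dist (θ x n) (θ z n) < ε := by
    intro z hz ε hε
    have hall : ∀ᶠ x in nhdsWithin z C, ∀ n ∈ Finset.range l,
        dist (θ x n) (θ z n) < ε := by
      rw [Filter.eventually_all_finset]
      intro n _
      have hcw : ContinuousWithinAt (fun x => θ x n) C z :=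
        ((continuous_apply n).comp_continuousOn hθC) z hz
      exact Metric.tendsto_nhds.mp hcw ε hε
    rcases mem_nhdsWithin.mp hall with ⟨U, hU, hzU, hsub⟩
    obtain ⟨m, hm⟩ := hbasis U hU z hzU
    refine ⟨m, fun x hxC hxm n hn => ?_⟩
    exact hsub ⟨hm x hxm, hxC⟩ n (Finset.mem_range.mpr hn)
  -- extension of finite conditions to full points
  have hext : ∀ (L0 : ℕ) (t : ∀ i, i < L0 → Z i),
      ∃ w : ∀ n, Z n, ∀ i (h : i < L0), w i = t i h := by
    intro L0
    induction L0 with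
    | zero =>
      exact fun t => ⟨fun n => Classical.arbitrary _,
        fun i h => absurd h (Nat.not_lt_zero i)⟩
    | succ m ih =>
      intro t
      obtain ⟨w, hw⟩ := ih (fun i h => t i (h.trans (Nat.lt_succ_self m)))
      refine ⟨Function.update w m (t m (Nat.lt_succ_self m)), fun i h => ?_⟩
      rcases Nat.lt_succ_iff_lt_or_eq.mp h with h' | rfl
      · rw [Function.update_of_ne (Nat.ne_of_lt h')]
        exact hw i h'
      · simp
  have hext2 : ∀ (L : ℕ) (s : ∀ i, Z (k + i)) (w0 : ∀ n, Z n),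
      ∃ w : ∀ n, Z n, (∀ i < k, w i = w0 i) ∧ (∀ i < L, w (k + i) = s i) := by
    intro L s
    induction L with
    | zero =>
      exact fun w0 => ⟨w0, fun _ _ => rfl, fun i h => absurd h (Nat.not_lt_zero i)⟩
    | succ m ih =>
      intro w0
      obtain ⟨w, hw1, hw2⟩ := ih w0
      refine ⟨Function.update w (k + m) (s m), fun i hi => ?_, fun i hi => ?_⟩
      · rw [Function.update_of_ne (by omega)]
        exact hw1 i hi
      · rcases Nat.lt_succ_iff_lt_or_eq.mp hi with h' | rfl
        · rw [Function.update_of_ne (by omega : k + i ≠ k + m)]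
          exact hw2 i h'
        · simp
  -- the small ε and its key property
  set ε : ℝ := ((((2 : ℝ) ^ j) * (l + 1))⁻¹ ^ (1 / q)) / 2 with hεdef
  have hpos : (0 : ℝ) < (((2 : ℝ) ^ j) * (l + 1))⁻¹ := by positivity
  have hεpos : 0 < ε := by
    rw [hεdef]
    positivity
  have h2eq : ((2 : ℝ) * ε) ^ q = (((2 : ℝ) ^ j) * (l + 1))⁻¹ := by
    have h1 : (2 : ℝ) * ε = (((2 : ℝ) ^ j) * (l + 1))⁻¹ ^ (1 / q) := by
      rw [hεdef]; ring
    rw [h1, ← Real.rpow_mul hpos.le, one_div_mul_cancel (ne_of_gt hq0), Real.rpow_one]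
  -- the one-step extension lemma
  have hstep : ∀ (L : ℕ) (s : ∀ i, Z (k + i)) (r : ∀ i : Fin k, Z i),
      ∃ (L' : ℕ) (s' : ∀ i, Z (k + i)), L ≤ L' ∧ (∀ i < L, s' i = s i) ∧
        (∀ x x' : ∀ n, Z n, x ∈ C → x' ∈ C →
          (∀ i (h : i < k), x i = r ⟨i, h⟩) → (∀ i (h : i < k), x' i = r ⟨i, h⟩) →
          (∀ i < L', x (k + i) = s' i) → (∀ i < L', x' (k + i) = s' i) →
          (∑ n ∈ Finset.range l, dist (θ x n) (θ x' n) ^ q) < ((2 : ℝ) ^ j)⁻¹) ∧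
        (∀ z : ∀ n, Z n, (∀ i (h : i < k), z i = r ⟨i, h⟩) →
          (∀ i < L', z (k + i) = s' i) → z ∈ G) := by
    intro L s r
    -- a point matching r below k and s below L
    obtain ⟨w0, hw0⟩ := hext k (fun i h => r ⟨i, h⟩)
    obtain ⟨w, hw1, hw2⟩ := hext2 L s w0
    have hwr : ∀ i (h : i < k), w i = r ⟨i, h⟩ := fun i h => (hw1 i h).trans (hw0 i h)
    -- find a point of G in the basic nbhd of w
    have hMopen := hopenN w (k + L)
    have hMne : {z : ∀ n, Z n | ∀ i < k + L, z i = w i}.Nonempty :=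
      ⟨w, fun i _ => rfl⟩
    obtain ⟨z1, hz1M, hz1G⟩ := hGdense.inter_open_nonempty _ hMopen hMne
    obtain ⟨m1, hm1⟩ := hbasis G hGopen z1 hz1G
    set m : ℕ := max m1 (k + L) with hmdef
    -- find a point of C in the basic nbhd of z1 of length m
    have hM2ne : {x : ∀ n, Z n | ∀ i < m, x i = z1 i}.Nonempty := ⟨z1, fun i _ => rfl⟩
    obtain ⟨z2, hz2M, hz2C⟩ := hCdense.inter_open_nonempty _ (hopenN z1 m) hM2ne
    obtain ⟨m2, hm2⟩ := hcont z2 hz2C ε hεpos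
    set m' : ℕ := max m2 m with hm'def
    have hm'k : k + L ≤ m' := le_trans (le_max_right m1 (k + L)) (le_max_right m2 m)
    have hz2z1 : ∀ i < m, z2 i = z1 i := hz2M
    have hz1w : ∀ i < k + L, z1 i = w i := hz1M
    refine ⟨m' - k, fun i => z2 (k + i), by omega, ?_, ?_, ?_⟩
    · intro i hi
      have h1 : k + i < m := lt_of_lt_of_le (by omega) (le_max_right m1 (k + L))
      show z2 (k + i) = s i
      rw [hz2z1 _ h1, hz1w _ (by omega), hw2 i hi]
    · -- the oscillation condition
      intro x x' hx hx' hxr hx'r hxs hx's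
      have hxz2 : ∀ i < m', x i = z2 i := by
        intro i hi
        by_cases hik : i < k
        · have him : i < m := lt_of_lt_of_le (by omega : i < k + L) (le_max_right m1 (k + L))
          rw [hxr i hik, ← hwr i hik, ← hz1w i (by omega), ← hz2z1 i him]
        · have hie : i = k + (i - k) := by omega
          rw [hie]
          exact hxs (i - k) (by omega)
      have hx'z2 : ∀ i < m', x' i = z2 i := by
        intro i hi
        by_cases hik : i < k
        · have him : i < m := lt_of_lt_of_le (by omega : i < k + L) (le_max_right m1 (k + L))
          rw [hx'r i hik, ← hwr i hik, ← hz1w i (by omega), ← hz2z1 i him]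
        · have hie : i = k + (i - k) := by omega
          rw [hie]
          exact hx's (i - k) (by omega)
      have hd1 := hm2 x hx (fun i hi => hxz2 i (lt_of_lt_of_le hi (le_max_left m2 m)))
      have hd2 := hm2 x' hx' (fun i hi => hx'z2 i (lt_of_lt_of_le hi (le_max_left m2 m)))
      have hterm : ∀ n ∈ Finset.range l,
          dist (θ x n) (θ x' n) ^ q ≤ ((2 : ℝ) * ε) ^ q := by
        intro n hn
        have hn' := Finset.mem_range.mp hn
        have hdd : dist (θ x n) (θ x' n) ≤ 2 * ε := by
          calc dist (θ x n) (θ x' n)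
              ≤ dist (θ x n) (θ z2 n) + dist (θ x' n) (θ z2 n) := dist_triangle_right _ _ _
            _ ≤ 2 * ε := by
                have := hd1 n hn'
                have := hd2 n hn'
                linarith
        exact Real.rpow_le_rpow dist_nonneg hdd (le_of_lt hq0)
      calc (∑ n ∈ Finset.range l, dist (θ x n) (θ x' n) ^ q)
          ≤ ∑ n ∈ Finset.range l, ((2 : ℝ) * ε) ^ q := Finset.sum_le_sum hterm
        _ = l * (((2 : ℝ) ^ j) * (l + 1))⁻¹ := by
            rw [Finset.sum_const, Finset.card_range, h2eq, nsmul_eq_mul]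
        _ < ((2 : ℝ) ^ j)⁻¹ := by
            rw [mul_inv]
            have h2j : (0 : ℝ) < ((2 : ℝ) ^ j)⁻¹ := by positivity
            have hll : (l : ℝ) * ((l : ℝ) + 1)⁻¹ < 1 := by
              rw [mul_inv_lt_iff₀ (by positivity), one_mul]
              linarith
            calc (l : ℝ) * (((2 : ℝ) ^ j)⁻¹ * ((l : ℝ) + 1)⁻¹)
                = ((l : ℝ) * ((l : ℝ) + 1)⁻¹) * ((2 : ℝ) ^ j)⁻¹ := by ring
              _ < 1 * ((2 : ℝ) ^ j)⁻¹ := by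
                  exact mul_lt_mul_of_pos_right hll h2j
              _ = ((2 : ℝ) ^ j)⁻¹ := one_mul _
    · -- the G condition
      intro z hzr hzs
      apply hm1
      intro i hi
      have him' : i < m' := lt_of_lt_of_le (lt_of_lt_of_le hi (le_max_left m1 (k + L)))
        (le_max_right m2 m)
      have hzz2 : z i = z2 i := by
        by_cases hik : i < k
        · rw [hzr i hik, ← hwr i hik, ← hz1w i (by omega), ← hz2z1 i]
          exact lt_of_lt_of_le hi (le_max_left m1 (k + L))
        · have hie : i = k + (i - k) := by omega
          rw [hie]
          exact hzs (i - k) (by omega)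
      rw [hzz2]
      exact hz2z1 i (lt_of_lt_of_le hi (le_max_left m1 (k + L)))
  -- induction over all r
  have hmain : ∀ T : Finset (∀ i : Fin k, Z i),
      ∃ (L : ℕ) (s : ∀ i, Z (k + i)), ∀ r ∈ T,
        (∀ x x' : ∀ n, Z n, x ∈ C → x' ∈ C →
          (∀ i (h : i < k), x i = r ⟨i, h⟩) → (∀ i (h : i < k), x' i = r ⟨i, h⟩) →
          (∀ i < L, x (k + i) = s i) → (∀ i < L, x' (k + i) = s i) →
          (∑ n ∈ Finset.range l, dist (θ x n) (θ x' n) ^ q) < ((2 : ℝ) ^ j)⁻¹) ∧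
        (∀ z : ∀ n, Z n, (∀ i (h : i < k), z i = r ⟨i, h⟩) →
          (∀ i < L, z (k + i) = s i) → z ∈ G) := by
    intro T
    induction T using Finset.induction_on with
    | empty =>
      exact ⟨0, fun i => Classical.arbitrary _,
        fun r hr => absurd hr (Finset.notMem_empty r)⟩
    | @insert a T ha ih =>
      obtain ⟨L, s, hLs⟩ := ih
      obtain ⟨L', s', hLL, hagree, h1, h2⟩ := hstep L s a
      refine ⟨L', s', fun r hr => ?_⟩
      rcases Finset.mem_insert.mp hr with rfl | hr
      · exact ⟨h1, h2⟩
      · obtain ⟨c1, c2⟩ := hLs r hr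
        constructor
        · intro x x' hx hx' hr1 hr2 hs1 hs2
          exact c1 x x' hx hx' hr1 hr2
            (fun i hi => by rw [hs1 i (lt_of_lt_of_le hi hLL), hagree i hi])
            (fun i hi => by rw [hs2 i (lt_of_lt_of_le hi hLL), hagree i hi])
        · intro z hzr hzs
          exact c2 z hzr
            (fun i hi => by rw [hzs i (lt_of_lt_of_le hi hLL), hagree i hi])
  obtain ⟨L, s, hL⟩ := hmain Finset.univ
  refine ⟨L, s, ?_, ?_⟩
  · intro x x' hx hx' hagreek hs1 hs2
    exact (hL (fun i => x i) (Finset.mem_univ _)).1 x x' hx hx'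
      (fun i h => rfl) (fun i h => (hagreek i h).symm) hs1 hs2
  · intro z hz
    exact (hL (fun i => z i) (Finset.mem_univ _)).2 z (fun i h => rfl) hz
end

section
/- Let (X, d) be a separable complete metric space, (Y_n, δ_n), n ∈ ℕ, separable complete metric spaces, p, q ∈ [1, +∞). Let F_n and Z_n, n ∈ ℕ, be finite subsets of X with F_n ⊆ Z_n, let (b_j)_{j∈ℕ}, (l_j)_{j∈ℕ} be strictly increasing sequences of natural numbers, and let T_j : Z_{b_j} → ∏_{n=l_j}^{l_{j+1}-1} Y_n be maps such that for all x, y ∈ ∏_{j∈ℕ} Z_{b_j}: ∑_{j∈ℕ} d(x(j), y(j))^p < +∞ if and only if ∑_{j∈ℕ} δ_q(T_j(x(j)), T_j(y(j)))^q < +∞, where δ_q(r, s) = (∑_{n=l_j}^{l_{j+1}-1} δ_n(r(n), s(n))^q)^{1/q}. Then for every C' > 0 there exists D > 0 such that for all sufficiently large j and all u, v ∈ F_{b_j} with d(u, v) ≥ C', one has δ_q(T_j(u), T_j(v)) ≥ D. -/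
theorem stmt10
    {X : Type*} [MetricSpace X] [TopologicalSpace.SeparableSpace X] [CompleteSpace X]
    {Y : ℕ → Type*} [∀ n, MetricSpace (Y n)]
    [∀ n, TopologicalSpace.SeparableSpace (Y n)] [∀ n, CompleteSpace (Y n)]
    (p q : ℝ) (hp : 1 ≤ p) (hq : 1 ≤ q)
    (F Z : ℕ → Finset X) (hFZ : ∀ n, F n ⊆ Z n) (hZne : ∀ n, (Z n).Nonempty)
    (b l : ℕ → ℕ) (hb : StrictMono b) (hl : StrictMono l)
    (T : ∀ j, {x : X // x ∈ Z (b j)} → ∀ n, Y n)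
    (hT : ∀ x y : ∀ j, {x : X // x ∈ Z (b j)},
      (Summable fun j => dist (x j : X) (y j : X) ^ p) ↔
      (Summable fun j =>
        ((∑ n ∈ Finset.Ico (l j) (l (j + 1)),
            dist (T j (x j) n) (T j (y j) n) ^ q) ^ (1 / q)) ^ q)) :
    ∀ C' : ℝ, 0 < C' → ∃ D : ℝ, 0 < D ∧ ∃ N : ℕ, ∀ j, N ≤ j →
      ∀ u v : X, ∀ hu : u ∈ F (b j), ∀ hv : v ∈ F (b j),
        C' ≤ dist u v →
        D ≤ (∑ n ∈ Finset.Ico (l j) (l (j + 1)),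
              dist (T j ⟨u, hFZ (b j) hu⟩ n) (T j ⟨v, hFZ (b j) hv⟩ n) ^ q) ^ (1 / q) := by
  classical
  intro C' hC'
  by_contra hcon
  push_neg at hcon
  have hq0 : q ≠ 0 := by positivity
  -- key existence at each scale
  have key : ∀ k N : ℕ, ∃ j, N ≤ j ∧ ∃ u v : X, ∃ hu : u ∈ F (b j), ∃ hv : v ∈ F (b j),
      C' ≤ dist u v ∧
      (∑ n ∈ Finset.Ico (l j) (l (j + 1)),
          dist (T j ⟨u, hFZ (b j) hu⟩ n) (T j ⟨v, hFZ (b j) hv⟩ n) ^ q) ^ (1 / q)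
        < min 1 ((1/2 : ℝ) ^ k) := by
    intro k N
    exact hcon (min 1 ((1/2 : ℝ) ^ k)) (by positivity) N
  -- the sequence of indices
  let seq : ℕ → ℕ := fun k => Nat.rec (key 0 0).choose (fun k ih => (key (k+1) (ih+1)).choose) k
  have hlt : ∀ k, seq k < seq (k+1) := fun k =>
    Nat.lt_of_succ_le (key (k+1) (seq k + 1)).choose_spec.1
  have smono : StrictMono seq := strictMono_nat_of_lt_succ hlt
  have hQ : ∀ k, ∃ u v : X, ∃ hu : u ∈ F (b (seq k)), ∃ hv : v ∈ F (b (seq k)),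
      C' ≤ dist u v ∧
      (∑ n ∈ Finset.Ico (l (seq k)) (l (seq k + 1)),
          dist (T (seq k) ⟨u, hFZ (b (seq k)) hu⟩ n) (T (seq k) ⟨v, hFZ (b (seq k)) hv⟩ n) ^ q)
          ^ (1 / q) < min 1 ((1/2 : ℝ) ^ k) := by
    intro k
    cases k with
    | zero => exact (key 0 0).choose_spec.2
    | succ k => exact (key (k+1) (seq k + 1)).choose_spec.2
  choose u v hu hv hCd hδ using hQ
  -- the two sequences
  obtain ⟨x, y, hx, hy, hxy0⟩ :
      ∃ x y : ∀ j, {x : X // x ∈ Z (b j)},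
        (∀ k, x (seq k) = ⟨u k, hFZ _ (hu k)⟩) ∧
        (∀ k, y (seq k) = ⟨v k, hFZ _ (hv k)⟩) ∧
        (∀ j, (¬ ∃ k, seq k = j) → x j = y j) := by
    refine ⟨fun j =>
        if h : ∃ k, seq k = j then
          ⟨u h.choose, (congrArg (fun m => u h.choose ∈ Z (b m)) h.choose_spec).mp (hFZ _ (hu h.choose))⟩
        else ⟨(hZne (b j)).choose, (hZne (b j)).choose_spec⟩,
      fun j =>
        if h : ∃ k, seq k = j then
          ⟨v h.choose, (congrArg (fun m => v h.choose ∈ Z (b m)) h.choose_spec).mp (hFZ _ (hv h.choose))⟩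
        else ⟨(hZne (b j)).choose, (hZne (b j)).choose_spec⟩, ?_, ?_, ?_⟩
    · intro k
      have hex : ∃ k', seq k' = seq k := ⟨k, rfl⟩
      beta_reduce
      rw [dif_pos hex]
      have hck : hex.choose = k := smono.injective hex.choose_spec
      exact Subtype.ext (by simp [hck])
    · intro k
      have hex : ∃ k', seq k' = seq k := ⟨k, rfl⟩
      beta_reduce
      rw [dif_pos hex]
      have hck : hex.choose = k := smono.injective hex.choose_spec
      exact Subtype.ext (by simp [hck])
    · intro j h
      beta_reduce
      rw [dif_neg h, dif_neg h]
  -- summability of the RHS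
  set f : ℕ → ℝ := fun j =>
    ((∑ n ∈ Finset.Ico (l j) (l (j + 1)), dist (T j (x j) n) (T j (y j) n) ^ q) ^ (1 / q)) ^ q
    with hf
  have hfnonneg : ∀ j, 0 ≤ f j := fun j => Real.rpow_nonneg (Real.rpow_nonneg (by positivity) _) _
  have hf0 : ∀ j ∉ Set.range seq, f j = 0 := by
    intro j hj
    have hxyj : x j = y j := hxy0 j (by simpa [Set.range] using hj)
    have h1q : q⁻¹ ≠ 0 := inv_ne_zero hq0
    simp [hf, hxyj, Real.zero_rpow hq0, Real.zero_rpow h1q, one_div]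
  have hfle : ∀ k, f (seq k) ≤ (1/2 : ℝ) ^ k := by
    intro k
    have hδk := hδ k
    simp only [hf, hx k, hy k]
    set δk : ℝ := (∑ n ∈ Finset.Ico (l (seq k)) (l (seq k + 1)),
        dist (T (seq k) ⟨u k, hFZ (b (seq k)) (hu k)⟩ n)
          (T (seq k) ⟨v k, hFZ (b (seq k)) (hv k)⟩ n) ^ q) ^ (1 / q) with hδkdef
    have hδknn : 0 ≤ δk := Real.rpow_nonneg (by positivity) _
    have hδk1 : δk ≤ 1 := le_of_lt (lt_of_lt_of_le hδk (min_le_left _ _))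
    have hδk2 : δk ≤ (1/2 : ℝ) ^ k := le_of_lt (lt_of_lt_of_le hδk (min_le_right _ _))
    rcases eq_or_lt_of_le hδknn with h0 | h0
    · rw [← h0, Real.zero_rpow hq0]
      positivity
    · calc δk ^ q ≤ δk ^ (1 : ℝ) :=
            Real.rpow_le_rpow_of_exponent_ge h0 hδk1 hq
        _ = δk := Real.rpow_one δk
        _ ≤ (1/2 : ℝ) ^ k := hδk2
  have hsum_f : Summable f :=
    (smono.injective.summable_iff hf0).mp
      (Summable.of_nonneg_of_le (fun k => hfnonneg _) hfle summable_geometric_two)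
  have hsum_d : Summable (fun j => dist (x j : X) (y j : X) ^ p) :=
    (hT x y).mpr (by simpa [hf] using hsum_f)
  have htend := (hsum_d.tendsto_atTop_zero).comp smono.tendsto_atTop
  have hge : ∀ k, C' ^ p ≤ dist (x (seq k) : X) (y (seq k) : X) ^ p := by
    intro k
    rw [hx k, hy k]
    exact Real.rpow_le_rpow hC'.le (hCd k) (by linarith)
  have hle0 : C' ^ p ≤ 0 := ge_of_tendsto htend (Filter.Eventually.of_forall hge)
  exact absurd hle0 (not_le.mpr (Real.rpow_pos_of_pos hC' p))
end

section
/- Let (X, d) be a separable complete metric space satisfying link(C) for some C > 0, (Y_n, δ_n), n ∈ ℕ, separable complete metric spaces, p, q ∈ [1, +∞). Let F_0 ⊆ F_1 ⊆ ⋯ be finite subsets of X with ⋃_n F_n dense in X. For each l ∈ ℕ let N(l) ≥ 1 witness link(C) for ε = 2^{-l}, with chains r^l_0(u,v) = u, r^l_1(u,v), …, r^l_{N(l)}(u,v) = v in X satisfying d(r^l_{i-1}(u,v), r^l_i(u,v)) < 2^{-l} for all u, v ∈ X with d(u,v) < C, and set Z_n = {r^l_i(u,v) : u, v ∈ F_n,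 d(u,v) < C, l ≤ n, 0 ≤ i ≤ N(l)}. Let (b_j)_{j∈ℕ}, (l_j)_{j∈ℕ} be strictly increasing sequences of natural numbers and T_j : Z_{b_j} → ∏_{n=l_j}^{l_{j+1}-1} Y_n maps such that for all x, y ∈ ∏_{j∈ℕ} Z_{b_j}: ∑_j d(x(j), y(j))^p < +∞ if and only if ∑_j δ_q(T_j(x(j)), T_j(y(j)))^q < +∞, where δ_q(r, s) = (∑_{n=l_j}^{l_{j+1}-1} δ_n(r(n), s(n))^q)^{1/q}. Then there exists m ∈ ℕ such that for every k ∈ ℕ there is N ∈ ℕ such that for all j > N and all u, v ∈ F_{b_j} with k^{-1} ≤ d(u,v) < C, one has 2^{-m} d(u,v)^{p/q} ≤ δ_q(T_j(u), T_j(v)) ≤ 2^m d(u,v)^{p/q}. -/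
/-!
Write `V = d^p` on pairs of points of `Z_{b_j}` and `W = δ_q(T_j ·, T_j ·)^q`. If the ratio `W / V`
were not eventually bounded above (or below) on the pairs of `F_{b_j}` at distance in `[1/k, C)`,
one could choose, in coordinates arbitrarily far out, finite blocks of such pairs whose `V`-sum
is at most `2⁻ᵐ` and whose `W`-sum is at least `1` (or the reverse); gluing the blocks for
`m = 0, 1, …` gives `x, y` with `∑ V` finite and `∑ W` infinite, against the hypothesis on `T`.
Collecting pairs into a block until its `W`-sum reaches `1` keeps that sum below `1 + M` once
`W` is bounded by `M`, and this bound comes from `link(C)`: if `δ_q(T_j u, T_j v)` were large for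
some pair at distance `< C`, the triangle inequality in `ℓ^q` along a chain of `N(t)` steps of
length `< 2⁻ᵗ` inside `Z_{b_j}` would give a pair with `V` small and `W ≥ 1`.
-/

/-- `(X, dist)` satisfies `link(C)`: for every `ε > 0` there is `N ≥ 1` such that any
two points at distance `< C` can be joined by a chain of `N` steps each of length `< ε`. -/
def Link (X : Type*) [MetricSpace X] (C : ℝ) : Prop :=
  ∀ ε : ℝ, 0 < ε → ∃ N : ℕ, 1 ≤ N ∧
    ∀ u v : X, dist u v < C → ∃ r : ℕ → X, r 0 = u ∧ r N = v ∧
      ∀ i, 1 ≤ i → i ≤ N → dist (r (i - 1)) (r i) < ε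

open Finset Filter

theorem exists_lt_dist_succ_of_mul_lt_dist {E : Type*} [PseudoMetricSpace E] (f : ℕ → E)
    {n : ℕ} {ε : ℝ} (h : n * ε < dist (f 0) (f n)) : ∃ i < n, ε < dist (f i) (f (i + 1)) := by
  by_contra! hle
  have := (dist_le_range_sum_dist f n).trans
    (sum_le_card_nsmul _ _ ε fun i hi => hle i (mem_range.mp hi))
  rw [card_range, nsmul_eq_mul] at this
  linarith

theorem dist_toLp_eq_sum {Y : ℕ → Type*} [∀ n, Dist (Y n)] {q : ℝ} (hq : 0 < q)
    (s : Finset ℕ) (f g : ∀ n, Y n) :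
    dist (WithLp.toLp (ENNReal.ofReal q) fun n : s => f n)
        (WithLp.toLp (ENNReal.ofReal q) fun n : s => g n) =
      (∑ n ∈ s, dist (f n) (g n) ^ q) ^ (1 / q) := by
  rw [PiLp.dist_eq_sum (by rwa [ENNReal.toReal_ofReal hq.le]), ENNReal.toReal_ofReal hq.le]
  exact congrArg (· ^ (1 / q)) (sum_coe_sort s fun n => dist (f n) (g n) ^ q)

theorem le_two_pow_mul_of_rpow_le_mul_rpow {x y q K : ℝ} {m : ℕ} (hx : 0 ≤ x) (hy : 0 ≤ y)
    (hq : 1 ≤ q) (hK : K ≤ 2 ^ m) (h : x ^ q ≤ K * y ^ q) : x ≤ 2 ^ m * y := by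
  rw [← Real.rpow_le_rpow_iff hx (by positivity) (by linarith : (0 : ℝ) < q)]
  calc x ^ q ≤ K * y ^ q := h
    _ ≤ 2 ^ m * y ^ q := by gcongr
    _ ≤ (2 ^ m) ^ q * y ^ q := by
        gcongr
        exact Real.self_le_rpow_of_one_le (one_le_pow₀ one_le_two) hq
    _ = (2 ^ m * y) ^ q := (Real.mul_rpow (by positivity) hy).symm

theorem two_pow_bounds_of_rpow_le_mul {D d p q K : ℝ} {m : ℕ} (hD : 0 ≤ D) (hd : 0 ≤ d)
    (hq : 1 ≤ q) (hK : K ≤ 2 ^ m) (hup : D ^ q ≤ K * d ^ p) (hlo : d ^ p ≤ K * D ^ q) :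
    (2 ^ m)⁻¹ * d ^ (p / q) ≤ D ∧ D ≤ 2 ^ m * d ^ (p / q) := by
  have hdpq : d ^ p = (d ^ (p / q)) ^ q := by
    rw [← Real.rpow_mul hd, div_mul_cancel₀ p (by linarith)]
  rw [hdpq] at hup hlo
  rw [inv_mul_le_iff₀ (by positivity)]
  exact ⟨le_two_pow_mul_of_rpow_le_mul_rpow (by positivity) hD hq hK hlo,
    le_two_pow_mul_of_rpow_le_mul_rpow hD (by positivity) hq hK hup⟩

theorem sum_range_eq_sum_sum_Ico {M : Type*} [AddCommMonoid M] {e : ℕ → ℕ} (he : Monotone e)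
    (he0 : e 0 = 0) (f : ℕ → M) (n : ℕ) :
    ∑ i ∈ range (e n), f i = ∑ m ∈ range n, ∑ i ∈ Ico (e m) (e (m + 1)), f i := by
  induction n with
  | zero => simp [he0]
  | succ n ih =>
    rw [sum_range_succ, ← ih, range_eq_Ico, range_eq_Ico,
      ← sum_Ico_consecutive f (Nat.zero_le (e n)) (he n.le_succ)]

section SeparatingBlocks

variable {α : ℕ → Type*} (V W : ∀ j, α j → α j → ℝ)

def HasSeparatingBlocks : Prop :=
  ∀ ε > 0, ∀ N₀ : ℕ, ∃ N₁ : ℕ, ∃ x y : ∀ j, α j,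
    ∑ j ∈ Ico N₀ N₁, V j (x j) (y j) ≤ ε ∧ 1 ≤ ∑ j ∈ Ico N₀ N₁, W j (x j) (y j)

variable {V W}

theorem HasSeparatingBlocks.exists_summable_not_summable (hV : ∀ j a b, 0 ≤ V j a b)
    (h : HasSeparatingBlocks V W) :
    ∃ x y : ∀ j, α j, Summable (fun j => V j (x j) (y j)) ∧
      ¬Summable (fun j => W j (x j) (y j)) := by
  choose N₁ X Y hVX hWX using h
  -- the `m`-th block is `Ico (e m) (e (m + 1))`, with `V`-sum at most `2⁻ᵐ`
  let e : ℕ → ℕ := fun m => Nat.rec 0 (fun m n => N₁ ((1 / 2) ^ m) (by positivity) n) m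
  let Xm : ℕ → ∀ j, α j := fun m => X ((1 / 2) ^ m) (by positivity) (e m)
  let Ym : ℕ → ∀ j, α j := fun m => Y ((1 / 2) ^ m) (by positivity) (e m)
  have hVm (m : ℕ) : ∑ j ∈ Ico (e m) (e (m + 1)), V j (Xm m j) (Ym m j) ≤ (1 / 2) ^ m :=
    hVX _ _ _
  have hWm (m : ℕ) : 1 ≤ ∑ j ∈ Ico (e m) (e (m + 1)), W j (Xm m j) (Ym m j) := hWX _ _ _
  have he : StrictMono e := strictMono_nat_of_lt_succ fun m => by
    have hne : (Ico (e m) (e (m + 1))).Nonempty :=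
      nonempty_of_sum_ne_zero (ne_of_gt (lt_of_lt_of_le one_pos (hWm m)))
    exact nonempty_Ico.mp hne
  have hblock (j : ℕ) : ∃ m, j < e (m + 1) := ⟨j, he.le_apply⟩
  classical
  let x : ∀ j, α j := fun j => Xm (Nat.find (hblock j)) j
  let y : ∀ j, α j := fun j => Ym (Nat.find (hblock j)) j
  have hfind {m j : ℕ} (hj : j ∈ Ico (e m) (e (m + 1))) : Nat.find (hblock j) = m := by
    rw [mem_Ico] at hj
    refine (Nat.find_eq_iff _).mpr ⟨hj.2, fun n hn => not_lt.mpr ?_⟩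
    exact (he.monotone (Nat.succ_le_of_lt hn)).trans hj.1
  have hsum_block (G : ∀ j, α j → α j → ℝ) (m : ℕ) :
      ∑ j ∈ Ico (e m) (e (m + 1)), G j (x j) (y j) =
        ∑ j ∈ Ico (e m) (e (m + 1)), G j (Xm m j) (Ym m j) :=
    sum_congr rfl fun j hj => by simp only [x, y, hfind hj]
  refine ⟨x, y, summable_of_sum_range_le (fun j => hV _ _ _) (c := 2) fun n => ?_, fun hW => ?_⟩
  · calc ∑ j ∈ range n, V j (x j) (y j)
        ≤ ∑ j ∈ range (e n), V j (x j) (y j) :=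
          sum_le_sum_of_subset_of_nonneg (range_subset_range.mpr he.le_apply)
            fun j _ _ => hV _ _ _
      _ = ∑ m ∈ range n, ∑ j ∈ Ico (e m) (e (m + 1)), V j (x j) (y j) :=
          sum_range_eq_sum_sum_Ico he.monotone rfl _ n
      _ ≤ ∑ m ∈ range n, (1 / 2 : ℝ) ^ m :=
          sum_le_sum fun m _ => (hsum_block V m).trans_le (hVm m)
      _ ≤ 2 := sum_geometric_two_le n
  · obtain ⟨s, hs⟩ := hW.vanishing (Iio_mem_nhds one_pos)
    obtain ⟨n, hsn⟩ := s.exists_nat_subset_range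
    have hdisj : Disjoint (Ico (e n) (e (n + 1))) s := by
      refine disjoint_left.mpr fun j hj hjs => ?_
      have := mem_range.mp (hsn hjs)
      have := (mem_Ico.mp hj).1
      have := he.le_apply (x := n)
      omega
    have := hs _ hdisj
    rw [Set.mem_Iio, hsum_block W n] at this
    exact (hWm n).not_gt this

theorem sum_Ico_update_update {G : ∀ j, α j → α j → ℝ} (hG : ∀ j a, G j a a = 0)
    (d : ∀ j, α j) {N₀ j : ℕ} (hj : N₀ ≤ j) (a b : α j) :
    ∑ i ∈ Ico N₀ (j + 1), G i (Function.update d j a i) (Function.update d j b i) = G j a b := by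
  classical
  rw [sum_eq_single_of_mem j (mem_Ico.mpr ⟨hj, j.lt_succ_self⟩) fun i _ hij => by
    rw [Function.update_of_ne hij, Function.update_of_ne hij, hG]]
  simp only [Function.update_self]

theorem sum_Ico_ite_lt {G : ∀ j, α j → α j → ℝ} (x y x' y' : ∀ j, α j) {a b c : ℕ}
    (hab : a ≤ b) (hbc : b ≤ c) :
    ∑ i ∈ Ico a c, G i (if i < b then x i else x' i) (if i < b then y i else y' i) =
      ∑ i ∈ Ico a b, G i (x i) (y i) + ∑ i ∈ Ico b c, G i (x' i) (y' i) := by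
  rw [← sum_Ico_consecutive _ hab hbc]
  congr 1 <;> refine sum_congr rfl fun i hi => ?_ <;> rw [mem_Ico] at hi
  · simp only [if_pos hi.2]
  · simp only [if_neg (not_lt.mpr hi.1)]

variable [∀ j, Nonempty (α j)]

theorem hasSeparatingBlocks_of_frequently (hVd : ∀ j a, V j a a = 0) (hWd : ∀ j a, W j a a = 0)
    (h : ∀ ε > 0, ∃ᶠ j in atTop, ∃ a b : α j, V j a b ≤ ε ∧ 1 ≤ W j a b) :
    HasSeparatingBlocks V W := by
  intro ε hε N₀
  obtain ⟨j, ⟨a, b, hVab, hWab⟩, hj⟩ := ((h ε hε).and_eventually (eventually_ge_atTop N₀)).exists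
  let d : ∀ j, α j := fun _ => Classical.arbitrary _
  refine ⟨j + 1, Function.update d j a, Function.update d j b, ?_, ?_⟩
  · rwa [sum_Ico_update_update hVd d hj]
  · rwa [sum_Ico_update_update hWd d hj]

theorem exists_block_of_frequently_le_mul {δ c M : ℝ} (hc : 0 < c)
    (hVd : ∀ j a, V j a a = 0) (hWd : ∀ j a, W j a a = 0)
    (h : ∃ᶠ j in atTop, ∃ a b : α j, V j a b ≤ δ * W j a b ∧ c ≤ W j a b ∧ W j a b ≤ M)
    (N₀ : ℕ) :
    ∃ N₁ : ℕ, ∃ x y : ∀ j, α j,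
      ∑ j ∈ Ico N₀ N₁, V j (x j) (y j) ≤ δ * ∑ j ∈ Ico N₀ N₁, W j (x j) (y j) ∧
      1 ≤ ∑ j ∈ Ico N₀ N₁, W j (x j) (y j) ∧ ∑ j ∈ Ico N₀ N₁, W j (x j) (y j) ≤ 1 + M := by
  let d : ∀ j, α j := fun _ => Classical.arbitrary _
  have hM : 0 ≤ M := by
    obtain ⟨j, a, b, -, hca, haM⟩ := h.exists
    linarith
  -- add pairs one at a time while the `W`-sum is below `1`; each adds at least `c`
  have hgrow (n : ℕ) : ∃ N₁, N₀ ≤ N₁ ∧ ∃ x y : ∀ j, α j,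
      ∑ j ∈ Ico N₀ N₁, V j (x j) (y j) ≤ δ * ∑ j ∈ Ico N₀ N₁, W j (x j) (y j) ∧
      min 1 (n * c) ≤ ∑ j ∈ Ico N₀ N₁, W j (x j) (y j) ∧
      ∑ j ∈ Ico N₀ N₁, W j (x j) (y j) ≤ 1 + M := by
    induction n with
    | zero => exact ⟨N₀, le_rfl, d, d, by simp, by simp, by simp; linarith⟩
    | succ n ih =>
      obtain ⟨N₁, hN₁, x, y, hV, hn, hW⟩ := ih
      by_cases h1 : 1 ≤ ∑ j ∈ Ico N₀ N₁, W j (x j) (y j)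
      · exact ⟨N₁, hN₁, x, y, hV, (min_le_left _ _).trans h1, hW⟩
      obtain ⟨j, ⟨a, b, hVab, hca, haM⟩, hj⟩ :=
        (h.and_eventually (eventually_ge_atTop N₁)).exists
      have hnc : n * c ≤ ∑ j ∈ Ico N₀ N₁, W j (x j) (y j) := (min_le_iff.mp hn).resolve_left h1
      have hN₁j : N₁ ≤ j + 1 := hj.trans j.le_succ
      refine ⟨j + 1, hN₁.trans hN₁j, fun i => if i < N₁ then x i else Function.update d j a i,
        fun i => if i < N₁ then y i else Function.update d j b i, ?_⟩
      rw [sum_Ico_ite_lt _ _ _ _ hN₁ hN₁j, sum_Ico_ite_lt _ _ _ _ hN₁ hN₁j,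
        sum_Ico_update_update hVd d hj, sum_Ico_update_update hWd d hj]
      push_cast
      refine ⟨by linarith, min_le_of_right_le (by linarith), by linarith⟩
  obtain ⟨n, hn⟩ := exists_nat_ge c⁻¹
  obtain ⟨N₁, -, x, y, hV, h1, hW⟩ := hgrow n
  refine ⟨N₁, x, y, hV, ?_, hW⟩
  rwa [min_eq_left ((inv_le_iff_one_le_mul₀ hc).mp hn)] at h1

theorem hasSeparatingBlocks_of_frequently_le_mul
    (hVd : ∀ j a, V j a a = 0) (hWd : ∀ j a, W j a a = 0) {M : ℝ}
    (h : ∀ δ > 0, ∃ c > 0, ∃ᶠ j in atTop, ∃ a b : α j,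
      V j a b ≤ δ * W j a b ∧ c ≤ W j a b ∧ W j a b ≤ M) :
    HasSeparatingBlocks V W := by
  intro ε hε N₀
  obtain ⟨c, hc, hfreq⟩ := h (ε / (1 + |M|)) (by positivity)
  obtain ⟨N₁, x, y, hV, h1, hW⟩ := exists_block_of_frequently_le_mul hc hVd hWd hfreq N₀
  refine ⟨N₁, x, y, hV.trans ?_, h1⟩
  calc ε / (1 + |M|) * ∑ j ∈ Ico N₀ N₁, W j (x j) (y j) ≤ ε / (1 + |M|) * (1 + |M|) := by
        gcongr
        exact hW.trans (by linarith [le_abs_self M])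
    _ = ε := div_mul_cancel₀ ε (by positivity)

variable {ι : Type*} {S : ι → ∀ j, α j → α j → Prop}

theorem exists_eventually_le_mul_of_summable_imp
    (hV : ∀ j a b, 0 ≤ V j a b) (hVd : ∀ j a, V j a a = 0) (hWd : ∀ j a, W j a a = 0)
    (hsum : ∀ x y : ∀ j, α j,
      Summable (fun j => V j (x j) (y j)) → Summable (fun j => W j (x j) (y j)))
    (hbdd : ∃ M, ∀ k, ∀ᶠ j in atTop, ∀ a b, S k j a b → W j a b ≤ M)
    (hpos : ∀ k, ∃ c > 0, ∀ᶠ j in atTop, ∀ a b, S k j a b → c ≤ max (V j a b) (W j a b)) :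
    ∃ K, ∀ k, ∀ᶠ j in atTop, ∀ a b, S k j a b → W j a b ≤ K * V j a b := by
  by_contra hK
  push Not at hK
  obtain ⟨M, hM⟩ := hbdd
  have hblocks : HasSeparatingBlocks V W := by
    refine hasSeparatingBlocks_of_frequently_le_mul hVd hWd (M := M) fun δ hδ => ?_
    obtain ⟨k, hk⟩ := hK (max 1 δ⁻¹)
    obtain ⟨c, hc, hck⟩ := hpos k
    refine ⟨c, hc, ((Filter.not_eventually.mp hk).and_eventually ((hM k).and hck)).mono ?_⟩
    rintro j ⟨hbad, hjM, hjc⟩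
    push Not at hbad
    obtain ⟨a, b, hab, hlt⟩ := hbad
    have hVW : V j a b ≤ δ * W j a b := calc
      V j a b ≤ δ * (max 1 δ⁻¹ * V j a b) := by
        rw [← mul_assoc]
        refine le_mul_of_one_le_left (hV j a b) ?_
        rw [← div_le_iff₀' hδ, one_div]
        exact le_max_right _ _
      _ ≤ δ * W j a b := by gcongr
    have hVW' : V j a b < W j a b :=
      lt_of_le_of_lt (le_mul_of_one_le_left (hV j a b) (le_max_left _ _)) hlt
    exact ⟨a, b, hVW, (max_eq_right hVW'.le) ▸ hjc a b hab, hjM a b hab⟩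
  obtain ⟨x, y, hVs, hWs⟩ := hblocks.exists_summable_not_summable hV
  exact hWs (hsum x y hVs)

theorem exists_eventually_le_mul_and_le_mul_of_summable_iff
    (hV : ∀ j a b, 0 ≤ V j a b) (hW : ∀ j a b, 0 ≤ W j a b)
    (hVd : ∀ j a, V j a a = 0) (hWd : ∀ j a, W j a a = 0)
    (hsum : ∀ x y : ∀ j, α j,
      Summable (fun j => V j (x j) (y j)) ↔ Summable (fun j => W j (x j) (y j)))
    (hbddV : ∃ M, ∀ k, ∀ᶠ j in atTop, ∀ a b, S k j a b → V j a b ≤ M)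
    (hbddW : ∃ M, ∀ k, ∀ᶠ j in atTop, ∀ a b, S k j a b → W j a b ≤ M)
    (hpos : ∀ k, ∃ c > 0, ∀ᶠ j in atTop, ∀ a b, S k j a b → c ≤ V j a b) :
    ∃ K, ∀ k, ∀ᶠ j in atTop, ∀ a b, S k j a b → W j a b ≤ K * V j a b ∧ V j a b ≤ K * W j a b := by
  have hpos' (k : ι) : ∃ c > 0, ∀ᶠ j in atTop, ∀ a b, S k j a b → c ≤ max (V j a b) (W j a b) :=
    (hpos k).imp fun c ⟨hc, h⟩ => ⟨hc, h.mono fun j hj a b hab => le_max_of_le_left (hj a b hab)⟩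
  obtain ⟨K₁, hK₁⟩ := exists_eventually_le_mul_of_summable_imp hV hVd hWd
    (fun x y => (hsum x y).mp) hbddW hpos'
  obtain ⟨K₂, hK₂⟩ := exists_eventually_le_mul_of_summable_imp hW hWd hVd
    (fun x y => (hsum x y).mpr) hbddV fun k => by simpa only [max_comm] using hpos' k
  refine ⟨max K₁ K₂, fun k => ((hK₁ k).and (hK₂ k)).mono fun j ⟨h₁, h₂⟩ a b hab => ⟨?_, ?_⟩⟩
  · exact (h₁ a b hab).trans (mul_le_mul_of_nonneg_right (le_max_left _ _) (hV j a b))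
  · exact (h₂ a b hab).trans (mul_le_mul_of_nonneg_right (le_max_right _ _) (hW j a b))

theorem exists_eventually_dist_le_of_chains {E : ℕ → Type*} [∀ j, PseudoMetricSpace (E j)]
    (g : ∀ j, α j → E j) {q : ℝ} (hq : 0 < q)
    (hV : ∀ j a b, 0 ≤ V j a b) (hVd : ∀ j a, V j a a = 0)
    (hsum : ∀ x y : ∀ j, α j, Summable (fun j => V j (x j) (y j)) →
      Summable (fun j => dist (g j (x j)) (g j (y j)) ^ q))
    {S : ∀ j, α j → α j → Prop}
    (hchain : ∀ ε > 0, ∃ K : ℕ, ∀ᶠ j in atTop, ∀ a b, S j a b →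
      ∃ c : ℕ → α j, c 0 = a ∧ c K = b ∧ ∀ i < K, V j (c i) (c (i + 1)) < ε) :
    ∃ M, ∀ᶠ j in atTop, ∀ a b, S j a b → dist (g j a) (g j b) ≤ M := by
  by_contra! hM
  have hblocks : HasSeparatingBlocks V fun j a b => dist (g j a) (g j b) ^ q := by
    refine hasSeparatingBlocks_of_frequently hVd (fun j a => by simp [hq.ne']) fun ε hε => ?_
    obtain ⟨K, hK⟩ := hchain ε hε
    refine ((Filter.not_eventually.mp (hM K)).and_eventually hK).mono ?_
    rintro j ⟨hfar, hj⟩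
    push Not at hfar
    obtain ⟨a, b, hab, hfar⟩ := hfar
    obtain ⟨c, rfl, rfl, hc⟩ := hj a b hab
    obtain ⟨i, hi, hstep⟩ :=
      exists_lt_dist_succ_of_mul_lt_dist (fun i => g j (c i)) (ε := 1) (by simpa using hfar)
    exact ⟨c i, c (i + 1), (hc i hi).le, Real.one_le_rpow hstep.le hq.le⟩
  obtain ⟨x, y, hVs, hWs⟩ := hblocks.exists_summable_not_summable hV
  exact hWs (hsum x y hVs)

theorem exists_eventually_le_mul_and_le_mul_of_chains {E : ℕ → Type*}
    [∀ j, PseudoMetricSpace (E j)] (g : ∀ j, α j → E j) {q : ℝ} (hq : 0 < q)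
    (hV : ∀ j a b, 0 ≤ V j a b) (hVd : ∀ j a, V j a a = 0)
    (hsum : ∀ x y : ∀ j, α j, Summable (fun j => V j (x j) (y j)) ↔
      Summable (fun j => dist (g j (x j)) (g j (y j)) ^ q))
    {S₀ : ∀ j, α j → α j → Prop}
    (hchain : ∀ ε > 0, ∃ K : ℕ, ∀ᶠ j in atTop, ∀ a b, S₀ j a b →
      ∃ c : ℕ → α j, c 0 = a ∧ c K = b ∧ ∀ i < K, V j (c i) (c (i + 1)) < ε)
    (hS : ∀ k j a b, S k j a b → S₀ j a b)
    (hbddV : ∃ M, ∀ k, ∀ᶠ j in atTop, ∀ a b, S k j a b → V j a b ≤ M)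
    (hpos : ∀ k, ∃ c > 0, ∀ᶠ j in atTop, ∀ a b, S k j a b → c ≤ V j a b) :
    ∃ K, ∀ k, ∀ᶠ j in atTop, ∀ a b, S k j a b →
      dist (g j a) (g j b) ^ q ≤ K * V j a b ∧ V j a b ≤ K * dist (g j a) (g j b) ^ q := by
  obtain ⟨M, hM⟩ :=
    exists_eventually_dist_le_of_chains g hq hV hVd (fun x y => (hsum x y).mp) hchain
  refine exists_eventually_le_mul_and_le_mul_of_summable_iff hV (fun _ _ _ => by positivity) hVd
    (fun j a => by simp [hq.ne']) hsum hbddV ⟨M ^ q, fun k => hM.mono fun j hj a b hab => ?_⟩ hpos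
  exact Real.rpow_le_rpow dist_nonneg (hj a b (hS k j a b hab)) hq.le

end SeparatingBlocks

theorem exists_eventually_chain {X : Type*} [PseudoMetricSpace X] {C p : ℝ} (hp : 0 < p)
    {F : ℕ → Finset X} {Z : ℕ → Set X} {N : ℕ → ℕ} {r : ℕ → X → X → ℕ → X}
    (hr0 : ∀ lvl u v, dist u v < C → r lvl u v 0 = u)
    (hrN : ∀ lvl u v, dist u v < C → r lvl u v (N lvl) = v)
    (hrstep : ∀ lvl u v, dist u v < C → ∀ i, 1 ≤ i → i ≤ N lvl →
      dist (r lvl u v (i - 1)) (r lvl u v i) < ((2 : ℝ) ^ lvl)⁻¹)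
    (hrZ : ∀ n u v, u ∈ F n → v ∈ F n → dist u v < C → ∀ lvl ≤ n, ∀ i ≤ N lvl, r lvl u v i ∈ Z n)
    {ε : ℝ} (hε : 0 < ε) :
    ∃ K : ℕ, ∀ᶠ n in atTop, ∀ a b : Z n, (a : X) ∈ F n ∧ (b : X) ∈ F n ∧ dist (a : X) b < C →
      ∃ c : ℕ → Z n, c 0 = a ∧ c K = b ∧ ∀ i < K, dist (c i : X) (c (i + 1)) ^ p < ε := by
  obtain ⟨t, ht⟩ := exists_pow_lt_of_lt_one (Real.rpow_pos_of_pos hε p⁻¹)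
    (by norm_num : (1 / 2 : ℝ) < 1)
  refine ⟨N t, (eventually_ge_atTop t).mono fun n hn a b ⟨ha, hb, hab⟩ => ?_⟩
  have hmem (i : ℕ) : r t a b (min i (N t)) ∈ Z n :=
    hrZ n a b ha hb hab t hn _ (min_le_right _ _)
  refine ⟨fun i => ⟨_, hmem i⟩, Subtype.ext ?_, Subtype.ext ?_, fun i hi => ?_⟩
  · simp [hr0 t _ _ hab]
  · simp [hrN t _ _ hab]
  · have := hrstep t a b hab (i + 1) (by omega) hi
    simp only [min_eq_left hi.le, min_eq_left (Nat.succ_le_of_lt hi), Nat.add_sub_cancel] at this ⊢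
    rw [one_div, inv_pow] at ht
    exact (Real.lt_rpow_inv_iff_of_pos dist_nonneg hε.le hp).mp (this.trans ht)

theorem stmt11_general
    {X : Type*} [MetricSpace X]
    {Y : ℕ → Type*} [∀ n, MetricSpace (Y n)]
    (p q : ℝ) (hp : 1 ≤ p) (hq : 1 ≤ q)
    (C : ℝ)
    (F : ℕ → Finset X)
    -- for each level `lvl`, `N lvl ≥ 1` witnesses `link(C)` for `ε = 2⁻ˡᵛˡ`,
    -- with chains `r lvl u v 0 = u, …, r lvl u v (N lvl) = v`:
    (N : ℕ → ℕ)
    (r : ℕ → X → X → ℕ → X)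
    (hr0 : ∀ lvl u v, dist u v < C → r lvl u v 0 = u)
    (hrN : ∀ lvl u v, dist u v < C → r lvl u v (N lvl) = v)
    (hrstep : ∀ lvl u v, dist u v < C → ∀ i, 1 ≤ i → i ≤ N lvl →
      dist (r lvl u v (i - 1)) (r lvl u v i) < ((2 : ℝ) ^ lvl)⁻¹)
    (Z : ℕ → Set X)
    (hZ : ∀ n, Z n = {z : X | ∃ u ∈ F n, ∃ v ∈ F n, ∃ lvl ≤ n, ∃ i ≤ N lvl,
      dist u v < C ∧ z = r lvl u v i})
    (hFZ : ∀ n, (F n : Set X) ⊆ Z n) (hZne : ∀ n, (Z n).Nonempty)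
    (b l : ℕ → ℕ) (hb : StrictMono b)
    (T : ∀ j, Z (b j) → ∀ n, Y n)
    (hT : ∀ x y : ∀ j, Z (b j),
      (Summable fun j => dist (x j : X) (y j : X) ^ p) ↔
      (Summable fun j =>
        ((∑ n ∈ Finset.Ico (l j) (l (j + 1)),
            dist (T j (x j) n) (T j (y j) n) ^ q) ^ (1 / q)) ^ q)) :
    ∃ m : ℕ, ∀ k : ℕ, 1 ≤ k → ∃ N₀ : ℕ, ∀ j, N₀ < j →
      ∀ u v : X, ∀ hu : u ∈ F (b j), ∀ hv : v ∈ F (b j),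
        (k : ℝ)⁻¹ ≤ dist u v → dist u v < C →
        ((2 : ℝ) ^ m)⁻¹ * dist u v ^ (p / q) ≤
            (∑ n ∈ Finset.Ico (l j) (l (j + 1)),
              dist (T j ⟨u, hFZ (b j) (Finset.mem_coe.mpr hu)⟩ n)
                   (T j ⟨v, hFZ (b j) (Finset.mem_coe.mpr hv)⟩ n) ^ q) ^ (1 / q) ∧
          (∑ n ∈ Finset.Ico (l j) (l (j + 1)),
              dist (T j ⟨u, hFZ (b j) (Finset.mem_coe.mpr hu)⟩ n)
                   (T j ⟨v, hFZ (b j) (Finset.mem_coe.mpr hv)⟩ n) ^ q) ^ (1 / q) ≤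
            (2 : ℝ) ^ m * dist u v ^ (p / q) := by
  have hp0 : 0 < p := by linarith
  have hq0 : 0 < q := by linarith
  have : Fact (1 ≤ ENNReal.ofReal q) := ⟨ENNReal.one_le_ofReal.mpr hq⟩
  have (j : ℕ) : Nonempty (Z (b j)) := (hZne (b j)).to_subtype
  -- `δ_q` on the `j`-th block of coordinates is the distance of `ℓ^q(Ico (l j) (l (j + 1)))`
  let g j (a : Z (b j)) : PiLp (ENNReal.ofReal q) fun n : Ico (l j) (l (j + 1)) => Y n :=
    WithLp.toLp _ fun n => T j a n
  let V j (a a' : Z (b j)) : ℝ := dist (a : X) a' ^ p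
  have hsum (x y : ∀ j, Z (b j)) : Summable (fun j => V j (x j) (y j)) ↔
      Summable fun j => dist (g j (x j)) (g j (y j)) ^ q := by
    simpa only [g, V, dist_toLp_eq_sum hq0] using hT x y
  let S₀ j (a a' : Z (b j)) : Prop := (a : X) ∈ F (b j) ∧ (a' : X) ∈ F (b j) ∧ dist (a : X) a' < C
  obtain ⟨K, hK⟩ := exists_eventually_le_mul_and_le_mul_of_chains g hq0 (V := V)
    (fun _ _ _ => by positivity) (fun j a => by simp [V, hp0.ne']) hsum (S₀ := S₀)
    (S := fun (k : {k : ℕ // 1 ≤ k}) j a a' => S₀ j a a' ∧ ((k : ℕ) : ℝ)⁻¹ ≤ dist (a : X) a')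
    (fun ε hε => (exists_eventually_chain (F := F) (Z := Z) hp0 hr0 hrN hrstep
      (fun n u v hu hv huv lvl hlvl i hi =>
        (hZ n).symm ▸ ⟨u, hu, v, hv, lvl, hlvl, i, hi, huv, rfl⟩)
      hε).imp fun K hK => hb.tendsto_atTop.eventually hK)
    (fun _ _ _ _ h => h.1)
    ⟨C ^ p, fun _ => Eventually.of_forall fun j a a' ⟨⟨_, _, h⟩, _⟩ =>
      Real.rpow_le_rpow dist_nonneg h.le hp0.le⟩
    fun k => ⟨((k : ℕ) : ℝ)⁻¹ ^ p, by have := k.2; positivity,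
      Eventually.of_forall fun j a a' ⟨_, h⟩ => Real.rpow_le_rpow (by positivity) h hp0.le⟩
  obtain ⟨m, hm⟩ := pow_unbounded_of_one_lt K one_lt_two
  refine ⟨m, fun k hk => ?_⟩
  obtain ⟨N₀, hN₀⟩ := eventually_atTop.mp (hK ⟨k, hk⟩)
  refine ⟨N₀, fun j hj u v hu hv hku huv => ?_⟩
  obtain ⟨hup, hlo⟩ := hN₀ j hj.le ⟨u, hFZ (b j) hu⟩ ⟨v, hFZ (b j) hv⟩ ⟨⟨hu, hv, huv⟩, hku⟩
  rw [← dist_toLp_eq_sum hq0]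
  exact two_pow_bounds_of_rpow_le_mul dist_nonneg dist_nonneg hq hm.le hup hlo

theorem stmt11
    {X : Type*} [MetricSpace X] [TopologicalSpace.SeparableSpace X] [CompleteSpace X]
    {Y : ℕ → Type*} [∀ n, MetricSpace (Y n)]
    [∀ n, TopologicalSpace.SeparableSpace (Y n)] [∀ n, CompleteSpace (Y n)]
    (p q : ℝ) (hp : 1 ≤ p) (hq : 1 ≤ q)
    (C : ℝ) (hC : 0 < C) (hlink : Link X C)
    (F : ℕ → Finset X) (hF : ∀ n, F n ⊆ F (n + 1))
    (hFdense : Dense (⋃ n, (F n : Set X)))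
    -- for each level `lvl`, `N lvl ≥ 1` witnesses `link(C)` for `ε = 2⁻ˡᵛˡ`,
    -- with chains `r lvl u v 0 = u, …, r lvl u v (N lvl) = v`:
    (N : ℕ → ℕ) (hN : ∀ lvl, 1 ≤ N lvl)
    (r : ℕ → X → X → ℕ → X)
    (hr0 : ∀ lvl u v, dist u v < C → r lvl u v 0 = u)
    (hrN : ∀ lvl u v, dist u v < C → r lvl u v (N lvl) = v)
    (hrstep : ∀ lvl u v, dist u v < C → ∀ i, 1 ≤ i → i ≤ N lvl →
      dist (r lvl u v (i - 1)) (r lvl u v i) < ((2 : ℝ) ^ lvl)⁻¹)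
    (Z : ℕ → Set X)
    (hZ : ∀ n, Z n = {z : X | ∃ u ∈ F n, ∃ v ∈ F n, ∃ lvl ≤ n, ∃ i ≤ N lvl,
      dist u v < C ∧ z = r lvl u v i})
    (hFZ : ∀ n, (F n : Set X) ⊆ Z n) (hZne : ∀ n, (Z n).Nonempty)
    (b l : ℕ → ℕ) (hb : StrictMono b) (hl : StrictMono l)
    (T : ∀ j, Z (b j) → ∀ n, Y n)
    (hT : ∀ x y : ∀ j, Z (b j),
      (Summable fun j => dist (x j : X) (y j : X) ^ p) ↔
      (Summable fun j =>
        ((∑ n ∈ Finset.Ico (l j) (l (j + 1)),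
            dist (T j (x j) n) (T j (y j) n) ^ q) ^ (1 / q)) ^ q)) :
    ∃ m : ℕ, ∀ k : ℕ, 1 ≤ k → ∃ N₀ : ℕ, ∀ j, N₀ < j →
      ∀ u v : X, ∀ hu : u ∈ F (b j), ∀ hv : v ∈ F (b j),
        (k : ℝ)⁻¹ ≤ dist u v → dist u v < C →
        ((2 : ℝ) ^ m)⁻¹ * dist u v ^ (p / q) ≤
            (∑ n ∈ Finset.Ico (l j) (l (j + 1)),
              dist (T j ⟨u, hFZ (b j) (Finset.mem_coe.mpr hu)⟩ n)
                   (T j ⟨v, hFZ (b j) (Finset.mem_coe.mpr hv)⟩ n) ^ q) ^ (1 / q) ∧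
          (∑ n ∈ Finset.Ico (l j) (l (j + 1)),
              dist (T j ⟨u, hFZ (b j) (Finset.mem_coe.mpr hu)⟩ n)
                   (T j ⟨v, hFZ (b j) (Finset.mem_coe.mpr hv)⟩ n) ^ q) ^ (1 / q) ≤
            (2 : ℝ) ^ m * dist u v ^ (p / q) :=
  stmt11_general p q hp hq C F N r hr0 hrN hrstep Z hZ hFZ hZne b l hb T hT
end
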